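/- arXiv:1306.5421 — 7 statements merged into one kernel-verified Lean document; each statement's English description precedes it below -/
import Mathlib

section
/- Let p be a strongly summable ultrafilter on an abelian group G such that FS(x) ∈ p for some sequence x : ℕ → G satisfying the 2-uniqueness of finite sums. Then p is additively isomorphic to a union ultrafilter; in fact the map φ given by φ(∑_{n∈a} x_n) = a sends p to a union ultrafilter. -/
open scoped BigOperators

/-- The set of finite sums of a sequence `x : ℕ → G`. -/
def FS {G : Type*} [AddCommGroup G] (x : ℕ → G) : Set G :=
  {g | ∃ a : Finset ℕ, a.Nonempty ∧ g = ∑ n ∈ a, x n}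

/-- An ultrafilter `p` on `G` is strongly summable if every `A ∈ p` contains an
FS-set (of a sequence with infinite range) belonging to `p`. -/
def StronglySummable {G : Type*} [AddCommGroup G] (p : Ultrafilter G) : Prop :=
  ∀ A ∈ p, ∃ x : ℕ → G, (Set.range x).Infinite ∧ FS x ∈ p ∧ FS x ⊆ A

/-- A sequence satisfies uniqueness of finite sums if equal finite sums have equal
index sets. -/
def UniqFS {G : Type*} [AddCommGroup G] (x : ℕ → G) : Prop :=
  ∀ a b : Finset ℕ, ∑ n ∈ a, x n = ∑ n ∈ b, x n → a = b

/-- A sequence `x` satisfies the 2-uniqueness of finite sums if whenever two finite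
sums with coefficients in `{1, 2}` agree, the index sets and the coefficient functions
agree. -/
def TwoUniqFS {G : Type*} [AddCommGroup G] (x : ℕ → G) : Prop :=
  ∀ (a b : Finset ℕ) (ε δ : ℕ → ℕ),
    (∀ n ∈ a, ε n = 1 ∨ ε n = 2) → (∀ n ∈ b, δ n = 1 ∨ δ n = 2) →
    ∑ n ∈ a, ε n • x n = ∑ n ∈ b, δ n • x n →
    a = b ∧ ∀ n ∈ a, ε n = δ n

/-- The set of finite unions of a family `X` of finite subsets of `ℕ`. -/
def FU (X : Set (Finset ℕ)) : Set (Finset ℕ) :=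
  {s | ∃ a : Finset (Finset ℕ), a.Nonempty ∧ ↑a ⊆ X ∧ s = a.sup id}

/-- A union ultrafilter: every member contains an FU-set, of a pairwise disjoint family,
belonging to the ultrafilter. -/
def IsUnionUltrafilter (q : Ultrafilter (Finset ℕ)) : Prop :=
  ∀ A ∈ q, ∃ X : Set (Finset ℕ), X.PairwiseDisjoint id ∧ FU X ∈ q ∧ FU X ⊆ A

/-- `p` is additively isomorphic to `q`: there are a sequence `x` satisfying uniqueness
of finite sums with `FS x ∈ p` and a pairwise disjoint family `y` of finite subsets of `ℕ`
such that the map `∑_{n ∈ a} x n ↦ ⋃_{n ∈ a} y n` sends `p` to `q`. -/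
def AddIsoToUnion {G : Type*} [AddCommGroup G] (p : Ultrafilter G)
    (q : Ultrafilter (Finset ℕ)) : Prop :=
  ∃ (x : ℕ → G) (y : ℕ → Finset ℕ) (φ : G → Finset ℕ),
    UniqFS x ∧ FS x ∈ p ∧
    (Pairwise fun m n => Disjoint (y m) (y n)) ∧
    (∀ a : Finset ℕ, a.Nonempty → φ (∑ n ∈ a, x n) = a.biUnion y) ∧
    Ultrafilter.map φ p = q


/-!
Choose, inside `φ⁻¹' A ∩ FS x ∈ p`, an FS-set `FS y ∈ p`, and write `y n = ∑ m ∈ a n, x m`.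
Since `y m + y n` is again a finite sum of the `x`'s, 2-uniqueness forces `a m` and `a n` to
be disjoint: otherwise the indices in `a m ∩ a n` would appear with coefficient 2 on the left
and 1 on the right. Hence `∑ n ∈ b, y n = ∑ m ∈ b.biUnion a, x m`, so `φ` maps `FS y` onto
`FU (Set.range a)`, which therefore lies in `φ p` and inside `A`.
-/

section

open Finset Function

variable {G : Type*} [AddCommGroup G] {x : ℕ → G}

theorem TwoUniqFS.uniqFS (hx : TwoUniqFS x) : UniqFS x := fun a b h =>
  (hx a b (fun _ => 1) (fun _ => 1) (fun _ _ => Or.inl rfl) (fun _ _ => Or.inl rfl)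
    (by simpa using h)).1

theorem UniqFS.injective_sum (hx : UniqFS x) : Injective fun a => ∑ n ∈ a, x n :=
  fun a b h => hx a b h

theorem sum_add_sum_eq_sum_union_nsmul (x : ℕ → G) (a b : Finset ℕ) :
    ∑ n ∈ a, x n + ∑ n ∈ b, x n = ∑ n ∈ a ∪ b, (if n ∈ a ∩ b then 2 else 1) • x n := by
  have hterm : ∀ n, (if n ∈ a ∩ b then 2 else 1) • x n = x n + if n ∈ a ∩ b then x n else 0 := by
    intro n
    split_ifs <;> simp [two_nsmul]
  rw [sum_congr rfl fun n _ => hterm n, sum_add_distrib, sum_ite_mem,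
    inter_eq_right.mpr (inter_subset_left.trans subset_union_left), sum_union_inter]

theorem TwoUniqFS.disjoint_of_sum_add_sum_eq (hx : TwoUniqFS x) {a b c : Finset ℕ}
    (h : ∑ n ∈ a, x n + ∑ n ∈ b, x n = ∑ n ∈ c, x n) : Disjoint a b := by
  rw [sum_add_sum_eq_sum_union_nsmul, ← sum_congr rfl fun n _ => one_nsmul (x n)] at h
  have hcoeff := (hx _ c _ (fun _ => 1) (fun n _ => by split_ifs <;> simp)
    (fun _ _ => Or.inl rfl) h).2
  refine disjoint_left.mpr fun n hna hnb => ?_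
  have := hcoeff n (mem_union_left _ hna)
  simp [hna, hnb] at this

theorem TwoUniqFS.exists_disjoint_supports {y : ℕ → G} (hx : TwoUniqFS x)
    (hy : FS y ⊆ FS x) :
    ∃ a : ℕ → Finset ℕ, Pairwise (Disjoint on a) ∧
      ∀ b : Finset ℕ, ∑ n ∈ b, y n = ∑ m ∈ b.biUnion a, x m := by
  have hsupp : ∀ n, ∃ a : Finset ℕ, y n = ∑ m ∈ a, x m := fun n =>
    let ⟨a, _, h⟩ := hy (show y n ∈ FS y from ⟨{n}, singleton_nonempty n, by simp⟩)
    ⟨a, h⟩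
  choose a ha using hsupp
  have hdisj : Pairwise (Disjoint on a) := by
    intro m n hmn
    obtain ⟨c, -, hc⟩ := hy ⟨{m, n}, insert_nonempty _ _, by rw [sum_pair hmn]⟩
    exact hx.disjoint_of_sum_add_sum_eq (c := c) (by rw [← ha m, ← ha n, hc])
  refine ⟨a, hdisj, fun b => ?_⟩
  rw [sum_biUnion (hdisj.set_pairwise _)]
  exact sum_congr rfl fun n _ => ha n

theorem FU_range (a : ℕ → Finset ℕ) :
    FU (Set.range a) = {s | ∃ b : Finset ℕ, b.Nonempty ∧ s = b.biUnion a} := by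
  classical
  ext s
  constructor
  · rintro ⟨F, hF, hFa, rfl⟩
    rw [← Set.image_univ, subset_set_image_iff] at hFa
    obtain ⟨b, -, rfl⟩ := hFa
    exact ⟨b, hF.of_image, by rw [sup_image, sup_eq_biUnion]; rfl⟩
  · rintro ⟨b, hb, rfl⟩
    refine ⟨b.image a, hb.image a, by simp, ?_⟩
    rw [sup_image, sup_eq_biUnion]
    rfl

theorem isUnionUltrafilter_map_of_twoUniqFS {p : Ultrafilter G} (hss : StronglySummable p)
    (hx : TwoUniqFS x) (hFS : FS x ∈ p) {φ : G → Finset ℕ}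
    (hφ : ∀ a : Finset ℕ, φ (∑ n ∈ a, x n) = a) :
    IsUnionUltrafilter (p.map φ) := by
  intro A hA
  obtain ⟨y, -, hFSy, hsub⟩ := hss _ (Filter.inter_mem (Ultrafilter.mem_map.mp hA) hFS)
  obtain ⟨a, hdisj, hsum⟩ := hx.exists_disjoint_supports fun _ hg => (hsub hg).2
  have hφy : ∀ b, φ (∑ n ∈ b, y n) = b.biUnion a := fun b => by rw [hsum, hφ]
  refine ⟨Set.range a, hdisj.range_pairwise, ?_, ?_⟩
  · refine Ultrafilter.mem_map.mpr (Filter.mem_of_superset hFSy ?_)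
    rintro g ⟨b, hb, rfl⟩
    rw [Set.mem_preimage, FU_range, hφy]
    exact ⟨b, hb, rfl⟩
  · rw [FU_range]
    rintro s ⟨b, hb, rfl⟩
    rw [← hφy]
    exact (hsub ⟨b, hb, rfl⟩).1

theorem addIsoToUnion_map_of_uniqFS {p : Ultrafilter G} (hx : UniqFS x) (hFS : FS x ∈ p)
    {φ : G → Finset ℕ} (hφ : ∀ a : Finset ℕ, φ (∑ n ∈ a, x n) = a) :
    AddIsoToUnion p (p.map φ) :=
  ⟨x, fun n => {n}, φ, hx, hFS, fun _ _ hmn => disjoint_singleton.mpr hmn,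
    fun a _ => by rw [hφ, biUnion_singleton_eq_self], rfl⟩

end

/-- If `p` is a strongly summable ultrafilter on an abelian group `G` and `FS x ∈ p`
for some sequence `x` satisfying the 2-uniqueness of finite sums, then `p` is additively
isomorphic to a union ultrafilter; in fact the map `φ` given by `φ(∑_{n ∈ a} x n) = a`
sends `p` to a union ultrafilter. -/
theorem addIsoToUnion_of_twoUniqFS {G : Type*} [AddCommGroup G]
    (p : Ultrafilter G) (hss : StronglySummable p)
    (x : ℕ → G) (hx : TwoUniqFS x) (hFS : FS x ∈ p) :
    (∃ q : Ultrafilter (Finset ℕ), IsUnionUltrafilter q ∧ AddIsoToUnion p q) ∧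
    ∀ φ : G → Finset ℕ, (∀ a : Finset ℕ, φ (∑ n ∈ a, x n) = a) →
      IsUnionUltrafilter (Ultrafilter.map φ p) := by
  have hunion : ∀ φ : G → Finset ℕ, (∀ a : Finset ℕ, φ (∑ n ∈ a, x n) = a) →
      IsUnionUltrafilter (p.map φ) := fun _ hφ =>
    isUnionUltrafilter_map_of_twoUniqFS hss hx hFS hφ
  have hφ : ∀ a : Finset ℕ, Function.invFun (fun b => ∑ n ∈ b, x n) (∑ n ∈ a, x n) = a :=
    Function.leftInverse_invFun hx.uniqFS.injective_sum
  exact ⟨⟨_, hunion _ hφ, addIsoToUnion_map_of_uniqFS hx.uniqFS hFS hφ⟩, hunion⟩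
end

section
/- Let p be a strongly summable ultrafilter on an abelian group G such that there exists a sequence x : ℕ → G satisfying the 2-uniqueness of finite sums with FS(x) ∈ p. Then p is sparse. -/
open scoped BigOperators

/-- An ultrafilter `p` on `G` is sparse if for every `A ∈ p` there are a sequence `x`
and a subsequence `y = x ∘ f` of `x` such that the range of `x` minus the range of `y`
is infinite, `FS x ⊆ A`, and `FS y ∈ p`. -/
def Sparse {G : Type*} [AddCommGroup G] (p : Ultrafilter G) : Prop :=
  ∀ A ∈ p, ∃ (x : ℕ → G) (f : ℕ → ℕ), StrictMono f ∧
    (Set.range x \ Set.range (x ∘ f)).Infinite ∧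
    FS x ⊆ A ∧ FS (x ∘ f) ∈ p

/-! ### Auxiliary combinatorial machinery -/

open scoped Classical

namespace SparseAux

/-- number of right endpoints (= number of interval components) of `t` -/
def rend (t : Finset ℕ) : ℕ := (t.filter fun x => x + 1 ∉ t).card

/-- number of `x ∈ s` with `x + 1 ∈ t` ("junctions" from `s` into `t`) -/
def jj (s t : Finset ℕ) : ℕ := (s.filter fun x => x + 1 ∈ t).card

lemma even_sum {s : Finset ℕ} {f : ℕ → ℕ} (h : ∀ i ∈ s, Even (f i)) :
    Even (∑ i ∈ s, f i) := by
  classical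
  induction s using Finset.cons_induction with
  | empty => simp
  | cons a s ha ih =>
      rw [Finset.sum_cons]
      exact (h a (Finset.mem_cons_self a s)).add
        (ih fun i hi => h i (Finset.mem_cons.mpr (Or.inr hi)))

lemma lend_eq_rend (t : Finset ℕ) :
    (t.filter fun x => x = 0 ∨ x - 1 ∉ t).card = (t.filter fun x => x + 1 ∉ t).card := by
  classical
  have hbij : (t.filter fun x => x + 1 ∈ t).card
      = (t.filter fun x => ¬(x = 0 ∨ x - 1 ∉ t)).card := by
    apply Finset.card_bij (fun x _ => x + 1)
    · intro a ha
      have h := Finset.mem_filter.mp ha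
      refine Finset.mem_filter.mpr ⟨h.2, ?_⟩
      push_neg
      refine ⟨by omega, ?_⟩
      simpa using h.1
    · intro a ha b hb hab; omega
    · intro b hb
      have h := Finset.mem_filter.mp hb
      push_neg at h
      obtain ⟨hbt, hb0, hbp⟩ := h
      refine ⟨b - 1, Finset.mem_filter.mpr ⟨hbp, ?_⟩, by omega⟩
      have : b - 1 + 1 = b := by omega
      rw [this]; exact hbt
  have h1 := Finset.card_filter_add_card_filter_not
      (s := t) (p := fun x => x + 1 ∈ t)
  have h2 := Finset.card_filter_add_card_filter_not
      (s := t) (p := fun x => x = 0 ∨ x - 1 ∉ t)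
  omega

lemma rend_union_add (s t : Finset ℕ) (h : Disjoint s t) :
    rend (s ∪ t) + (jj s t + jj t s) = rend s + rend t := by
  classical
  unfold rend jj
  have key : ∀ (u v : Finset ℕ), Disjoint u v →
      (u.filter fun x => x + 1 ∉ u ∪ v).card + (u.filter fun x => x + 1 ∈ v).card
        = (u.filter fun x => x + 1 ∉ u).card := by
    intro u v huv
    have hp := Finset.card_filter_add_card_filter_not
        (s := u.filter fun x => x + 1 ∉ u) (p := fun x => x + 1 ∈ v)
    have e1 : ((u.filter fun x => x + 1 ∉ u).filter fun x => x + 1 ∈ v)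
        = u.filter fun x => x + 1 ∈ v := by
      rw [Finset.filter_filter]
      apply Finset.filter_congr
      intro x hx
      constructor
      · rintro ⟨-, h2⟩; exact h2
      · intro h2; exact ⟨fun hc => (Finset.disjoint_left.mp huv hc) h2, h2⟩
    have e2 : ((u.filter fun x => x + 1 ∉ u).filter fun x => ¬ x + 1 ∈ v)
        = u.filter fun x => x + 1 ∉ u ∪ v := by
      rw [Finset.filter_filter]
      apply Finset.filter_congr
      intro x hx
      simp only [Finset.mem_union]
      tauto
    rw [e1, e2] at hp
    omega
  have hsplit : ((s ∪ t).filter fun x => x + 1 ∉ s ∪ t)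
      = (s.filter fun x => x + 1 ∉ s ∪ t) ∪ (t.filter fun x => x + 1 ∉ s ∪ t) :=
    Finset.filter_union _ _ _
  have hcard : ((s ∪ t).filter fun x => x + 1 ∉ s ∪ t).card
      = (s.filter fun x => x + 1 ∉ s ∪ t).card + (t.filter fun x => x + 1 ∉ s ∪ t).card := by
    rw [hsplit, Finset.card_union_of_disjoint
      (h.mono (Finset.filter_subset _ _) (Finset.filter_subset _ _))]
  have hs := key s t h
  have ht := key t s h.symm
  have ht' : (t.filter fun x => x + 1 ∉ t ∪ s).card
      = (t.filter fun x => x + 1 ∉ s ∪ t).card := by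
    rw [Finset.union_comm]
  omega

/-- If every block has a junction with block 0, we contradict disjointness. -/
lemma no_all_contacts (c : ℕ → Finset ℕ)
    (hdisj : ∀ m n, m ≠ n → Disjoint (c m) (c n))
    (hJ : ∀ n, n ≠ 0 → jj (c 0) (c n) + jj (c n) (c 0) ≠ 0) : False := by
  classical
  set P : Finset ℕ := (c 0).image (· + 1) ∪ (c 0).image (· - 1) with hP
  have hex : ∀ m : ℕ, ∃ v, v ∈ c (m + 1) ∧ v ∈ P := by
    intro m
    have hm := hJ (m + 1) (Nat.succ_ne_zero m)
    by_cases h1 : jj (c 0) (c (m + 1)) = 0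
    · have h2 : jj (c (m + 1)) (c 0) ≠ 0 := by omega
      have h2' : 0 < ((c (m+1)).filter fun x => x + 1 ∈ c 0).card := by
        rw [jj] at h2; omega
      obtain ⟨x, hx⟩ := Finset.card_pos.mp h2'
      have hx' := Finset.mem_filter.mp hx
      refine ⟨x, hx'.1, ?_⟩
      rw [hP]
      refine Finset.mem_union.mpr (Or.inr (Finset.mem_image.mpr ⟨x + 1, hx'.2, by omega⟩))
    · have h1' : 0 < ((c 0).filter fun x => x + 1 ∈ c (m+1)).card := by
        rw [jj] at h1; omega
      obtain ⟨x, hx⟩ := Finset.card_pos.mp h1'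
      have hx' := Finset.mem_filter.mp hx
      refine ⟨x + 1, hx'.2, ?_⟩
      rw [hP]
      exact Finset.mem_union.mpr (Or.inl (Finset.mem_image.mpr ⟨x, hx'.1, rfl⟩))
  choose v hv1 hv2 using hex
  have hvinj : Function.Injective v := by
    intro a b hab
    by_contra hne
    have h := hdisj (a + 1) (b + 1) (by omega)
    exact (Finset.disjoint_left.mp h (hv1 a)) (hab ▸ hv1 b)
  have hfin : Finite ℕ := by
    have : Function.Injective (fun m => (⟨v m, hv2 m⟩ : {x // x ∈ P})) := by
      intro a b hab
      exact hvinj (congrArg Subtype.val hab)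
    exact Finite.of_injective _ this
  exact not_finite ℕ

/-- per-block boundary-slot parity -/
lemma slots_even (c : ℕ → Finset ℕ) (u : ℕ → Prop)
    (hu : ∀ x, u x ↔ ∃ k, x ∈ c k)
    (bo : ℕ → ℕ)
    (hbo : ∀ x, u x → x ∈ c (bo x))
    (hbu : ∀ x n, x ∈ c n → bo x = n)
    (hJ : ∀ m n, m ≠ n → Even (jj (c m) (c n) + jj (c n) (c m))) (n : ℕ) :
    Even (((c n).filter (fun x => x = 0 ∨ ¬ u (x - 1))).card
      + ((c n).filter (fun x => ¬ u (x + 1))).card) := by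
  classical
  have hrsplit : rend (c n) = ((c n).filter (fun x => u (x + 1) ∧ x + 1 ∉ c n)).card
      + ((c n).filter (fun x => ¬ u (x + 1))).card := by
    unfold rend
    have hp := Finset.card_filter_add_card_filter_not
        (s := (c n).filter (fun x => x + 1 ∉ c n)) (p := fun x => u (x + 1))
    have e1 : (((c n).filter (fun x => x + 1 ∉ c n)).filter (fun x => u (x + 1)))
        = (c n).filter (fun x => u (x + 1) ∧ x + 1 ∉ c n) := by
      rw [Finset.filter_filter]
      apply Finset.filter_congr
      intro x hx; tauto
    have e2 : (((c n).filter (fun x => x + 1 ∉ c n)).filter (fun x => ¬ u (x + 1)))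
        = (c n).filter (fun x => ¬ u (x + 1)) := by
      rw [Finset.filter_filter]
      apply Finset.filter_congr
      intro x hx
      constructor
      · tauto
      · intro hni; exact ⟨fun hc => hni ((hu (x+1)).mpr ⟨n, hc⟩), hni⟩
    rw [e1, e2] at hp
    omega
  have hlsplit : ((c n).filter (fun x => x = 0 ∨ x - 1 ∉ c n)).card
      = ((c n).filter (fun x => x ≠ 0 ∧ u (x - 1) ∧ x - 1 ∉ c n)).card
      + ((c n).filter (fun x => x = 0 ∨ ¬ u (x - 1))).card := by
    have hp := Finset.card_filter_add_card_filter_not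
        (s := (c n).filter (fun x => x = 0 ∨ x - 1 ∉ c n))
        (p := fun x => x ≠ 0 ∧ u (x - 1))
    have e1 : (((c n).filter (fun x => x = 0 ∨ x - 1 ∉ c n)).filter
          (fun x => x ≠ 0 ∧ u (x - 1)))
        = (c n).filter (fun x => x ≠ 0 ∧ u (x - 1) ∧ x - 1 ∉ c n) := by
      rw [Finset.filter_filter]
      apply Finset.filter_congr
      intro x hx; tauto
    have e2 : (((c n).filter (fun x => x = 0 ∨ x - 1 ∉ c n)).filter
          (fun x => ¬ (x ≠ 0 ∧ u (x - 1))))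
        = (c n).filter (fun x => x = 0 ∨ ¬ u (x - 1)) := by
      rw [Finset.filter_filter]
      apply Finset.filter_congr
      intro x hx
      constructor
      · rintro ⟨h1, h2⟩; tauto
      · intro hni
        constructor
        · rcases hni with h0 | hnu
          · exact Or.inl h0
          · by_cases hx0 : x = 0
            · exact Or.inl hx0
            · exact Or.inr (fun hc => hnu ((hu (x-1)).mpr ⟨n, hc⟩))
        · tauto
    rw [e1, e2] at hp
    omega
  have hle := lend_eq_rend (c n)
  have hdeg : Even (((c n).filter (fun x => u (x + 1) ∧ x + 1 ∉ c n)).card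
      + ((c n).filter (fun x => x ≠ 0 ∧ u (x - 1) ∧ x - 1 ∉ c n)).card) := by
    set B := (((c n).filter (fun x => u (x + 1) ∧ x + 1 ∉ c n)).image (fun x => bo (x + 1)))
        ∪ (((c n).filter (fun x => x ≠ 0 ∧ u (x - 1) ∧ x - 1 ∉ c n)).image
            (fun x => bo (x - 1))) with hB
    have hBn : ∀ m ∈ B, m ≠ n := by
      intro m hm
      rcases Finset.mem_union.mp hm with h | h
      · obtain ⟨x, hx, rfl⟩ := Finset.mem_image.mp h
        obtain ⟨hxc, hxU, hxnc⟩ := Finset.mem_filter.mp hx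
        intro hEq; exact hxnc (hEq ▸ hbo (x + 1) hxU)
      · obtain ⟨x, hx, rfl⟩ := Finset.mem_image.mp h
        obtain ⟨hxc, hx0, hxU, hxnc⟩ := Finset.mem_filter.mp hx
        intro hEq; exact hxnc (hEq ▸ hbo (x - 1) hxU)
    have h1 : ((c n).filter (fun x => u (x + 1) ∧ x + 1 ∉ c n)).card
        = ∑ m ∈ B, jj (c n) (c m) := by
      rw [Finset.card_eq_sum_card_fiberwise (f := fun x => bo (x + 1)) (t := B)
        (fun x hx => Finset.mem_union.mpr (Or.inl (Finset.mem_image.mpr ⟨x, hx, rfl⟩)))]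
      apply Finset.sum_congr rfl
      intro m hm
      have hfib : ((c n).filter (fun x => u (x + 1) ∧ x + 1 ∉ c n)).filter
            (fun x => bo (x + 1) = m)
          = (c n).filter (fun x => x + 1 ∈ c m) := by
        ext x
        constructor
        · intro hx
          obtain ⟨hx1, hbo'⟩ := Finset.mem_filter.mp hx
          obtain ⟨hxc, hxU, hxnc⟩ := Finset.mem_filter.mp hx1
          exact Finset.mem_filter.mpr ⟨hxc, hbo' ▸ hbo (x + 1) hxU⟩
        · intro hx
          obtain ⟨hxc, hxm⟩ := Finset.mem_filter.mp hx
          have hU : u (x + 1) := (hu (x+1)).mpr ⟨m, hxm⟩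
          have hbom := hbu (x + 1) m hxm
          have hmn : m ≠ n := hBn m hm
          refine Finset.mem_filter.mpr ⟨Finset.mem_filter.mpr ⟨hxc, hU, fun hc => hmn ?_⟩, hbom⟩
          rw [← hbom, hbu (x + 1) n hc]
      rw [hfib]; rfl
    have h2 : ((c n).filter (fun x => x ≠ 0 ∧ u (x - 1) ∧ x - 1 ∉ c n)).card
        = ∑ m ∈ B, jj (c m) (c n) := by
      rw [Finset.card_eq_sum_card_fiberwise (f := fun x => bo (x - 1)) (t := B)
        (fun x hx => Finset.mem_union.mpr (Or.inr (Finset.mem_image.mpr ⟨x, hx, rfl⟩)))]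
      apply Finset.sum_congr rfl
      intro m hm
      have hfib : ((c n).filter (fun x => x ≠ 0 ∧ u (x - 1) ∧ x - 1 ∉ c n)).filter
            (fun x => bo (x - 1) = m)
          = (c n).filter (fun x => x ≠ 0 ∧ x - 1 ∈ c m) := by
        ext x
        constructor
        · intro hx
          obtain ⟨hx1, hbo'⟩ := Finset.mem_filter.mp hx
          obtain ⟨hxc, hx0, hxU, hxnc⟩ := Finset.mem_filter.mp hx1
          exact Finset.mem_filter.mpr ⟨hxc, hx0, hbo' ▸ hbo (x - 1) hxU⟩
        · intro hx
          obtain ⟨hxc, hx0, hxm⟩ := Finset.mem_filter.mp hx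
          have hU : u (x - 1) := (hu (x-1)).mpr ⟨m, hxm⟩
          have hbom := hbu (x - 1) m hxm
          have hmn : m ≠ n := hBn m hm
          refine Finset.mem_filter.mpr
            ⟨Finset.mem_filter.mpr ⟨hxc, hx0, hU, fun hc => hmn ?_⟩, hbom⟩
          rw [← hbom, hbu (x - 1) n hc]
      rw [hfib]
      unfold jj
      apply Finset.card_bij (fun x _ => x - 1)
      · intro a ha
        have h := Finset.mem_filter.mp ha
        refine Finset.mem_filter.mpr ⟨h.2.2, ?_⟩
        have : a - 1 + 1 = a := by omega
        rw [this]; exact h.1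
      · intro a ha b hb hab
        have ha' := (Finset.mem_filter.mp ha).2.1
        have hb' := (Finset.mem_filter.mp hb).2.1
        omega
      · intro b hb
        have h := Finset.mem_filter.mp hb
        refine ⟨b + 1, Finset.mem_filter.mpr ⟨h.2, by omega, by simpa using h.1⟩, by omega⟩
    rw [h1, h2, ← Finset.sum_add_distrib]
    apply even_sum
    intro m hm
    have h' := hJ m n (hBn m hm)
    have hcomm : jj (c n) (c m) + jj (c m) (c n) = jj (c m) (c n) + jj (c n) (c m) := by omega
    rw [hcomm]; exact h'
  rw [Nat.even_iff] at hdeg ⊢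
  unfold rend at hrsplit
  omega

/-- MAIN COUNTING LEMMA: a pairwise disjoint family of finite blocks with pairwise even
junction counts has coinfinite union. -/
lemma counting (c : ℕ → Finset ℕ)
    (hdisj : ∀ m n, m ≠ n → Disjoint (c m) (c n))
    (hJ : ∀ m n, m ≠ n → Even (jj (c m) (c n) + jj (c n) (c m))) :
    {x : ℕ | ∀ n, x ∉ c n}.Infinite := by
  classical
  by_contra hfin
  rw [Set.not_infinite] at hfin
  let inU : ℕ → Prop := fun x => ∃ n, x ∈ c n
  have hcompl : ∀ x, ¬ inU x → x ∈ {x : ℕ | ∀ n, x ∉ c n} := by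
    intro x hx n hxn; exact hx ⟨n, hxn⟩
  obtain ⟨N₀, hN₀⟩ : ∃ N₀, ∀ x ∈ {x : ℕ | ∀ n, x ∉ c n}, x ≤ N₀ := by
    obtain ⟨b, hb⟩ := hfin.bddAbove
    exact ⟨b, fun x hx => hb hx⟩
  have hNex : ∃ N, ∀ x, N ≤ x → inU x := by
    refine ⟨N₀ + 1, fun x hx => ?_⟩
    by_contra hxU
    exact absurd (hN₀ x (hcompl x hxU)) (by omega)
  let N := Nat.find hNex
  have hNspec : ∀ x, N ≤ x → inU x := Nat.find_spec hNex
  have hNmin : ∀ x, N = x + 1 → ¬ inU x := by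
    intro x hx hxU
    have hmin := Nat.find_min hNex (m := x) (by omega)
    push_neg at hmin
    obtain ⟨y, hy1, hy2⟩ := hmin
    rcases Nat.eq_or_lt_of_le hy1 with rfl | hlt
    · exact hy2 hxU
    · exact hy2 (hNspec y (by omega))
  have hbo' : ∀ x : ℕ, ∃ n, inU x → x ∈ c n := by
    intro x
    by_cases h : inU x
    · obtain ⟨n, hn⟩ := h; exact ⟨n, fun _ => hn⟩
    · exact ⟨0, fun hc => absurd hc h⟩
  choose bo hbo using hbo'
  have hbu : ∀ x n, x ∈ c n → bo x = n := by
    intro x n hx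
    by_contra hne'
    exact Finset.disjoint_left.mp (hdisj _ _ hne') (hbo x ⟨n, hx⟩) hx
  have hLbound : ∀ x, inU x → (x = 0 ∨ ¬ inU (x - 1)) → x ≤ N := by
    intro x hxU hx0
    by_contra h
    rcases hx0 with h0 | hpred
    · omega
    · exact hpred (hNspec (x - 1) (by omega))
  have hRbound : ∀ x, inU x → ¬ inU (x + 1) → x < N := by
    intro x hxU hx1
    by_contra h
    exact hx1 (hNspec (x + 1) (by omega))
  let Lset := (Finset.range (N + 1)).filter (fun x => inU x ∧ (x = 0 ∨ ¬ inU (x - 1)))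
  let Rset := (Finset.range (N + 1)).filter (fun x => inU x ∧ ¬ inU (x + 1))
  have hK1 : Lset.card = Rset.card + 1 := by
    let V := (Finset.range N).filter inU
    have hVmem : ∀ x, x ∈ V ↔ (x < N ∧ inU x) := by
      intro x
      constructor
      · intro h
        have h' := Finset.mem_filter.mp h
        exact ⟨Finset.mem_range.mp h'.1, h'.2⟩
      · intro h
        exact Finset.mem_filter.mpr ⟨Finset.mem_range.mpr h.1, h.2⟩
    have hRV : Rset = V.filter (fun x => x + 1 ∉ V) := by
      ext x
      constructor
      · intro hx
        obtain ⟨hrange, hxU, hx1⟩ := Finset.mem_filter.mp hx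
        have hxN : x < N := hRbound x hxU hx1
        exact Finset.mem_filter.mpr
          ⟨(hVmem x).mpr ⟨hxN, hxU⟩, fun hx1V => hx1 ((hVmem _).mp hx1V).2⟩
      · intro hx
        obtain ⟨hxV, hx1V⟩ := Finset.mem_filter.mp hx
        obtain ⟨hxN, hxU⟩ := (hVmem x).mp hxV
        refine Finset.mem_filter.mpr ⟨Finset.mem_range.mpr (by omega), hxU, fun hU1 => hx1V ?_⟩
        have hne1 : x + 1 ≠ N := fun hEq => (hNmin x hEq.symm) hxU
        exact (hVmem _).mpr ⟨by omega, hU1⟩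
    have hNL : N ∈ Lset := by
      refine Finset.mem_filter.mpr ⟨Finset.mem_range.mpr (by omega), hNspec N le_rfl, ?_⟩
      rcases Nat.eq_zero_or_pos N with h0 | hpos
      · exact Or.inl h0
      · exact Or.inr (hNmin (N - 1) (by omega))
    have hLU : Lset = (V.filter (fun x => x = 0 ∨ x - 1 ∉ V)) ∪ {N} := by
      ext x
      rw [Finset.mem_union, Finset.mem_singleton]
      constructor
      · intro hx
        obtain ⟨hrange, hxU, hcond⟩ := Finset.mem_filter.mp hx
        by_cases hxN : x = N
        · exact Or.inr hxN
        · left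
          have hxle := hLbound x hxU hcond
          have hxltN : x < N := by omega
          refine Finset.mem_filter.mpr ⟨(hVmem x).mpr ⟨hxltN, hxU⟩, ?_⟩
          rcases hcond with h0 | hpred
          · exact Or.inl h0
          · exact Or.inr (fun hmem => hpred ((hVmem _).mp hmem).2)
      · rintro (hx | rfl)
        · obtain ⟨hxV, hcond⟩ := Finset.mem_filter.mp hx
          obtain ⟨hxN, hxU⟩ := (hVmem x).mp hxV
          refine Finset.mem_filter.mpr ⟨Finset.mem_range.mpr (by omega), hxU, ?_⟩
          rcases hcond with h0 | hV1
          · exact Or.inl h0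
          · by_cases hx0 : x = 0
            · exact Or.inl hx0
            · right; intro hU'
              exact hV1 ((hVmem _).mpr ⟨by omega, hU'⟩)
        · exact hNL
    have hdisjU : Disjoint (V.filter (fun x => x = 0 ∨ x - 1 ∉ V)) ({N} : Finset ℕ) := by
      rw [Finset.disjoint_right]
      intro x hx hmem
      rw [Finset.mem_singleton] at hx
      have hxV := (hVmem x).mp (Finset.mem_filter.mp hmem).1
      omega
    have hc := lend_eq_rend V
    rw [hLU, Finset.card_union_of_disjoint hdisjU, Finset.card_singleton, hRV]
    omega
  have hK2 : ∀ n, Even (((c n).filter (fun x => x = 0 ∨ ¬ inU (x - 1))).card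
      + ((c n).filter (fun x => ¬ inU (x + 1))).card) :=
    slots_even c inU (fun x => Iff.rfl) bo hbo hbu hJ
  let BB := (Lset ∪ Rset).image bo
  have hLfib : Lset.card = ∑ m ∈ BB, ((c m).filter (fun x => x = 0 ∨ ¬ inU (x - 1))).card := by
    rw [Finset.card_eq_sum_card_fiberwise (f := bo) (t := BB)
      (fun x hx => Finset.mem_image.mpr ⟨x, Finset.mem_union.mpr (Or.inl hx), rfl⟩)]
    apply Finset.sum_congr rfl
    intro m hm
    have hfib : Lset.filter (fun x => bo x = m)
        = (c m).filter (fun x => x = 0 ∨ ¬ inU (x - 1)) := by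
      ext x
      constructor
      · intro hx
        obtain ⟨hx1, hbo'⟩ := Finset.mem_filter.mp hx
        obtain ⟨hrange, hxU, hcond⟩ := Finset.mem_filter.mp hx1
        exact Finset.mem_filter.mpr ⟨hbo' ▸ hbo x hxU, hcond⟩
      · intro hx
        obtain ⟨hxc, hcond⟩ := Finset.mem_filter.mp hx
        have hxU : inU x := ⟨m, hxc⟩
        have hb := hLbound x hxU hcond
        exact Finset.mem_filter.mpr
          ⟨Finset.mem_filter.mpr ⟨Finset.mem_range.mpr (by omega), hxU, hcond⟩, hbu x m hxc⟩
    rw [hfib]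
  have hRfib : Rset.card = ∑ m ∈ BB, ((c m).filter (fun x => ¬ inU (x + 1))).card := by
    rw [Finset.card_eq_sum_card_fiberwise (f := bo) (t := BB)
      (fun x hx => Finset.mem_image.mpr ⟨x, Finset.mem_union.mpr (Or.inr hx), rfl⟩)]
    apply Finset.sum_congr rfl
    intro m hm
    have hfib : Rset.filter (fun x => bo x = m)
        = (c m).filter (fun x => ¬ inU (x + 1)) := by
      ext x
      constructor
      · intro hx
        obtain ⟨hx1, hbo'⟩ := Finset.mem_filter.mp hx
        obtain ⟨hrange, hxU, hcond⟩ := Finset.mem_filter.mp hx1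
        exact Finset.mem_filter.mpr ⟨hbo' ▸ hbo x hxU, hcond⟩
      · intro hx
        obtain ⟨hxc, hcond⟩ := Finset.mem_filter.mp hx
        have hxU : inU x := ⟨m, hxc⟩
        have hb := hRbound x hxU hcond
        exact Finset.mem_filter.mpr
          ⟨Finset.mem_filter.mpr ⟨Finset.mem_range.mpr (by omega), hxU, hcond⟩, hbu x m hxc⟩
    rw [hfib]
  have hEvenTot : Even (Lset.card + Rset.card) := by
    rw [hLfib, hRfib, ← Finset.sum_add_distrib]
    exact even_sum (fun m _ => hK2 m)
  rw [hK1, Nat.even_iff] at hEvenTot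
  omega

/-! ### Group-side machinery -/

variable {G : Type*} [AddCommGroup G]

lemma mem_FS_single (y : ℕ → G) (n : ℕ) : y n ∈ FS y :=
  ⟨{n}, Finset.singleton_nonempty n, (Finset.sum_singleton y n).symm⟩

lemma mem_FS_pair (y : ℕ → G) {m n : ℕ} (h : m ≠ n) : y m + y n ∈ FS y :=
  ⟨{m, n}, ⟨m, Finset.mem_insert_self m {n}⟩, (Finset.sum_pair h).symm⟩

lemma sum_smul_split (g : ℕ → G) (S T : Finset ℕ) :
    ∑ x ∈ S ∪ T, (if x ∈ S ∩ T then 2 else 1 : ℕ) • g x = ∑ x ∈ S, g x + ∑ x ∈ T, g x := by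
  classical
  have h1 : ∀ x, (if x ∈ S ∩ T then 2 else 1 : ℕ) • g x
      = g x + (if x ∈ S ∩ T then g x else 0) := by
    intro x
    by_cases h : x ∈ S ∩ T
    · simp [h, two_nsmul]
    · simp [h]
  rw [Finset.sum_congr rfl (fun x _ => h1 x), Finset.sum_add_distrib, Finset.sum_ite_mem]
  have h2 : (S ∪ T) ∩ (S ∩ T) = S ∩ T := by
    apply Finset.inter_eq_right.mpr
    exact le_trans Finset.inter_subset_left Finset.subset_union_left
  rw [h2]
  exact Finset.sum_union_inter

lemma twoUniq_sum_inj {z : ℕ → G} (hz : TwoUniqFS z) {S T : Finset ℕ}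
    (h : ∑ n ∈ S, z n = ∑ n ∈ T, z n) : S = T := by
  have := hz S T (fun _ => 1) (fun _ => 1) (fun _ _ => Or.inl rfl) (fun _ _ => Or.inl rfl)
    (by simpa [one_nsmul] using h)
  exact this.1

lemma twoUniq_disjoint {z : ℕ → G} (hz : TwoUniqFS z) {S T U : Finset ℕ}
    (h : ∑ n ∈ S, z n + ∑ n ∈ T, z n = ∑ n ∈ U, z n) : Disjoint S T := by
  classical
  have heq : ∑ x ∈ S ∪ T, (if x ∈ S ∩ T then 2 else 1 : ℕ) • z x
      = ∑ n ∈ U, (1 : ℕ) • z n := by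
    rw [sum_smul_split]
    simpa [one_nsmul] using h
  have hc := hz (S ∪ T) U _ _
    (fun n _ => by by_cases h : n ∈ S ∩ T <;> simp [h])
    (fun _ _ => Or.inl rfl) heq
  rw [Finset.disjoint_iff_inter_eq_empty]
  by_contra hne
  obtain ⟨x, hx⟩ := Finset.nonempty_iff_ne_empty.mpr hne
  have h2 := hc.2 x (Finset.mem_union.mpr (Or.inl (Finset.mem_inter.mp hx).1))
  rw [if_pos hx] at h2
  omega

lemma transfer {z y : ℕ → G} (hz : TwoUniqFS z) (hsub : FS y ⊆ FS z) :
    (∀ S T : Finset ℕ, ∑ n ∈ S, y n = ∑ n ∈ T, y n → S = T) ∧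
    (∀ S T U : Finset ℕ, ∑ n ∈ S, y n + ∑ n ∈ T, y n = ∑ n ∈ U, y n → Disjoint S T) := by
  classical
  have hrep : ∀ n : ℕ, ∃ a : Finset ℕ, a.Nonempty ∧ y n = ∑ x ∈ a, z x :=
    fun n => hsub (mem_FS_single y n)
  choose a hane haeq using hrep
  have hadisj : ∀ m n, m ≠ n → Disjoint (a m) (a n) := by
    intro m n hmn
    obtain ⟨U, hUne, hUeq⟩ := hsub (mem_FS_pair y hmn)
    refine twoUniq_disjoint hz (T := a n) (U := U) ?_
    rw [← haeq, ← haeq, ← hUeq]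
  have hbig : ∀ F : Finset ℕ, ∑ n ∈ F, y n = ∑ x ∈ F.biUnion a, z x := by
    intro F
    rw [Finset.sum_biUnion]
    · exact Finset.sum_congr rfl (fun n _ => haeq n)
    · intro i _ j _ hij
      exact hadisj i j hij
  have hbiinj : ∀ S T : Finset ℕ, S.biUnion a = T.biUnion a → S = T := by
    have key : ∀ S T : Finset ℕ, S.biUnion a = T.biUnion a → S ⊆ T := by
      intro S T h n hn
      obtain ⟨x, hx⟩ := hane n
      have hx' : x ∈ T.biUnion a := h ▸ (Finset.mem_biUnion.mpr ⟨n, hn, hx⟩)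
      obtain ⟨m, hm, hxm⟩ := Finset.mem_biUnion.mp hx'
      rcases eq_or_ne n m with rfl | hne
      · exact hm
      · exact absurd hxm (Finset.disjoint_left.mp (hadisj n m hne) hx)
    intro S T h
    exact le_antisymm (key S T h) (key T S h.symm)
  refine ⟨?_, ?_⟩
  · intro S T h
    refine hbiinj S T (twoUniq_sum_inj hz ?_)
    rw [← hbig, ← hbig]
    exact h
  · intro S T U h
    have hz' : ∑ x ∈ S.biUnion a, z x + ∑ x ∈ T.biUnion a, z x = ∑ x ∈ U.biUnion a, z x := by
      rw [← hbig, ← hbig, ← hbig]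
      exact h
    have hD := twoUniq_disjoint hz hz'
    rw [Finset.disjoint_left]
    intro k hkS hkT
    obtain ⟨x, hx⟩ := hane k
    exact Finset.disjoint_left.mp hD
      (Finset.mem_biUnion.mpr ⟨k, hkS, hx⟩) (Finset.mem_biUnion.mpr ⟨k, hkT, hx⟩)

/-- Key extraction: inside any `FS y ∈ p` with unique sums, there is `FS w ∈ p` whose
`y`-blocks are pairwise disjoint and miss infinitely many indices. -/
lemma key_extraction (p : Ultrafilter G) (hss : StronglySummable p) (y : ℕ → G)
    (huniq : ∀ S T : Finset ℕ, ∑ n ∈ S, y n = ∑ n ∈ T, y n → S = T)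
    (hno : ∀ S T U : Finset ℕ, ∑ n ∈ S, y n + ∑ n ∈ T, y n = ∑ n ∈ U, y n → Disjoint S T)
    (hyp : FS y ∈ p) :
    ∃ (w : ℕ → G) (c : ℕ → Finset ℕ),
      FS w ∈ p ∧ (∀ n, w n = ∑ i ∈ c n, y i) ∧ (∀ n, (c n).Nonempty) ∧
      (∀ m n, m ≠ n → Disjoint (c m) (c n)) ∧ {x : ℕ | ∀ n, x ∉ c n}.Infinite := by
  classical
  have hrep : ∀ g : G, ∃ F : Finset ℕ, g ∈ FS y → (F.Nonempty ∧ g = ∑ n ∈ F, y n) := by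
    intro g
    by_cases hg : g ∈ FS y
    · obtain ⟨F, h1, h2⟩ := hg
      exact ⟨F, fun _ => ⟨h1, h2⟩⟩
    · exact ⟨∅, fun hmem => absurd hmem hg⟩
  choose supp hsupp using hrep
  have hsne : ∀ {g}, g ∈ FS y → (supp g).Nonempty := fun hg => (hsupp _ hg).1
  have hseq : ∀ {g}, g ∈ FS y → g = ∑ n ∈ supp g, y n := fun hg => (hsupp _ hg).2
  have hsuniq : ∀ {g} (F : Finset ℕ), g ∈ FS y → g = ∑ n ∈ F, y n → F = supp g := by
    intro g F hg hF
    apply huniq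
    rw [← hF, ← hseq hg]
  have block_facts : ∀ w : ℕ → G, FS w ⊆ FS y →
      (∀ n, w n = ∑ i ∈ supp (w n), y i) ∧ (∀ n, (supp (w n)).Nonempty) ∧
      (∀ m n, m ≠ n → Disjoint (supp (w m)) (supp (w n))) ∧
      (∀ m n, m ≠ n → supp (w m + w n) = supp (w m) ∪ supp (w n)) := by
    intro w hsub
    have hmem : ∀ n, w n ∈ FS y := fun n => hsub (mem_FS_single w n)
    have hpairmem : ∀ m n, m ≠ n → w m + w n ∈ FS y := fun m n h => hsub (mem_FS_pair w h)
    have hdisj : ∀ m n, m ≠ n → Disjoint (supp (w m)) (supp (w n)) := by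
      intro m n h
      obtain ⟨U, hUne, hUeq⟩ := hpairmem m n h
      apply hno _ _ U
      rw [← hseq (hmem m), ← hseq (hmem n), ← hUeq]
    refine ⟨fun n => hseq (hmem n), fun n => hsne (hmem n), hdisj, ?_⟩
    intro m n h
    have heq : w m + w n = ∑ i ∈ supp (w m) ∪ supp (w n), y i := by
      rw [Finset.sum_union (hdisj m n h), ← hseq (hmem m), ← hseq (hmem n)]
    exact (hsuniq _ (hpairmem m n h) heq).symm
  have hEp : {g | g ∈ FS y ∧ Even (rend (supp g))} ∈ p := by
    by_contra hEp
    have hOp : {g | g ∈ FS y ∧ ¬ Even (rend (supp g))} ∈ p := by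
      have h1 : {g | g ∈ FS y ∧ Even (rend (supp g))}ᶜ ∈ p :=
        (Ultrafilter.compl_mem_iff_notMem).mpr hEp
      have h2 := Filter.inter_mem ((Ultrafilter.mem_coe).mpr hyp) ((Ultrafilter.mem_coe).mpr h1)
      apply (Ultrafilter.mem_coe).mp
      apply Filter.mem_of_superset h2
      rintro g ⟨hg1, hg2⟩
      exact ⟨hg1, fun hev => hg2 ⟨hg1, hev⟩⟩
    obtain ⟨w, hwr, hwp, hwsub⟩ := hss _ hOp
    have hsubFS : FS w ⊆ FS y := fun g hg => (hwsub hg).1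
    obtain ⟨hweq, hwne, hwdisj, hwpair⟩ := block_facts w hsubFS
    apply no_all_contacts (fun n => supp (w n)) hwdisj
    intro n hn
    have h0n : (0 : ℕ) ≠ n := Ne.symm hn
    have hOdd1 : ¬ Even (rend (supp (w 0))) := (hwsub (mem_FS_single w 0)).2
    have hOdd2 : ¬ Even (rend (supp (w n))) := (hwsub (mem_FS_single w n)).2
    have hOddU : ¬ Even (rend (supp (w 0) ∪ supp (w n))) := by
      have h := (hwsub (mem_FS_pair w h0n)).2
      rwa [hwpair 0 n h0n] at h
    have hmerge := rend_union_add (supp (w 0)) (supp (w n)) (hwdisj 0 n h0n)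
    rw [Nat.even_iff] at hOdd1 hOdd2 hOddU
    omega
  obtain ⟨w, hwr, hwp, hwsub⟩ := hss _ hEp
  have hsubFS : FS w ⊆ FS y := fun g hg => (hwsub hg).1
  obtain ⟨hweq, hwne, hwdisj, hwpair⟩ := block_facts w hsubFS
  refine ⟨w, fun n => supp (w n), hwp, hweq, hwne, hwdisj, ?_⟩
  apply counting _ hwdisj
  intro m n hmn
  have hE1 : Even (rend (supp (w m))) := (hwsub (mem_FS_single w m)).2
  have hE2 : Even (rend (supp (w n))) := (hwsub (mem_FS_single w n)).2
  have hEU : Even (rend (supp (w m) ∪ supp (w n))) := by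
    have h := (hwsub (mem_FS_pair w hmn)).2
    rwa [hwpair m n hmn] at h
  have hmerge := rend_union_add (supp (w m)) (supp (w n)) (hwdisj m n hmn)
  rw [Nat.even_iff] at hE1 hE2 hEU ⊢
  omega

end SparseAux

open SparseAux

/-- A strongly summable ultrafilter containing an FS-set of a sequence satisfying the
2-uniqueness of finite sums is sparse. -/
theorem sparse_of_twoUniqFS {G : Type*} [AddCommGroup G] (p : Ultrafilter G)
    (hss : StronglySummable p) (h : ∃ x : ℕ → G, TwoUniqFS x ∧ FS x ∈ p) :
    Sparse p := by
  classical
  obtain ⟨z, hz, hzp⟩ := h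
  intro A hA
  have hBp : (A ∩ FS z) ∈ p := by
    apply (Ultrafilter.mem_coe).mp
    exact Filter.inter_mem ((Ultrafilter.mem_coe).mpr hA) ((Ultrafilter.mem_coe).mpr hzp)
  obtain ⟨y, hyrange, hyp, hysub⟩ := hss _ hBp
  have hysubz : FS y ⊆ FS z := fun g hg => (hysub hg).2
  have hysubA : FS y ⊆ A := fun g hg => (hysub hg).1
  obtain ⟨huniq, hno⟩ := transfer hz hysubz
  obtain ⟨w, c, hwp, hweq, hcne, hcdisj, hinf⟩ := key_extraction p hss y huniq hno hyp
  -- choose infinitely many avoided indices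
  let je : ℕ ↪ {x : ℕ | ∀ n, x ∉ c n} := hinf.natEmbedding
  let j : ℕ → ℕ := fun k => (je k : ℕ)
  have hjinj : Function.Injective j := fun a b hab => je.injective (Subtype.ext hab)
  have hjavoid : ∀ k n, j k ∉ c n := fun k n => (je k).2 n
  -- the witnessing sequence
  let x : ℕ → G := fun k => if k % 2 = 0 then w (k / 2) else y (j (k / 2))
  have hxeven : ∀ n, x (2 * n) = w n := by
    intro n
    have h1 : (2 * n) % 2 = 0 := by omega
    have h2 : (2 * n) / 2 = n := by omega
    simp only [x, h1, if_pos, h2]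
  have hxodd : ∀ k, x (2 * k + 1) = y (j k) := by
    intro k
    have h1 : (2 * k + 1) % 2 ≠ 0 := by omega
    have h2 : (2 * k + 1) / 2 = k := by omega
    simp only [x, h2, if_neg h1]
  have hxfw : (x ∘ fun n => 2 * n) = w := by
    funext n
    exact hxeven n
  have hyinj : Function.Injective y := by
    intro m n hmn
    have h := huniq {m} {n} (by simpa using hmn)
    simpa using h
  refine ⟨x, fun n => 2 * n, ?_, ?_, ?_, ?_⟩
  · intro a b hab
    simpa using hab
  · -- range difference is infinite
    have hQ : Set.range (fun k => y (j k)) ⊆ Set.range x \ Set.range (x ∘ fun n => 2 * n) := by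
      rintro g ⟨k, rfl⟩
      constructor
      · exact ⟨2 * k + 1, hxodd k⟩
      · rintro ⟨n, hn⟩
        rw [hxfw] at hn
        have heq : ∑ i ∈ ({j k} : Finset ℕ), y i = ∑ i ∈ c n, y i := by
          rw [Finset.sum_singleton, ← hweq n]
          exact hn.symm
        have hset := huniq {j k} (c n) heq
        have : j k ∈ c n := by
          rw [← hset]
          exact Finset.mem_singleton_self (j k)
        exact hjavoid k n this
    exact (Set.infinite_range_of_injective (hyinj.comp hjinj)).mono hQ
  · -- FS x ⊆ A
    rintro g ⟨P, hPne, rfl⟩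
    apply hysubA
    have hsplit : ∑ k ∈ P, x k
        = ∑ k ∈ P.filter (fun k => k % 2 = 0), x k
          + ∑ k ∈ P.filter (fun k => ¬ k % 2 = 0), x k :=
      (Finset.sum_filter_add_sum_filter_not P _ x).symm
    have hinj0 : ∀ a ∈ P.filter (fun k => k % 2 = 0), ∀ b ∈ P.filter (fun k => k % 2 = 0),
        a / 2 = b / 2 → a = b := by
      intro a ha b hb hab
      have ha' := (Finset.mem_filter.mp ha).2
      have hb' := (Finset.mem_filter.mp hb).2
      omega
    have h0 : ∑ k ∈ P.filter (fun k => k % 2 = 0), x k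
        = ∑ n ∈ (P.filter (fun k => k % 2 = 0)).image (· / 2), w n := by
      rw [Finset.sum_image hinj0]
      apply Finset.sum_congr rfl
      intro k hk
      have hk' := (Finset.mem_filter.mp hk).2
      simp only [x, if_pos hk']
    have hinj1 : ∀ a ∈ P.filter (fun k => ¬ k % 2 = 0), ∀ b ∈ P.filter (fun k => ¬ k % 2 = 0),
        a / 2 = b / 2 → a = b := by
      intro a ha b hb hab
      have ha' := (Finset.mem_filter.mp ha).2
      have hb' := (Finset.mem_filter.mp hb).2
      omega
    have h1 : ∑ k ∈ P.filter (fun k => ¬ k % 2 = 0), x k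
        = ∑ i ∈ ((P.filter (fun k => ¬ k % 2 = 0)).image (· / 2)).image j, y i := by
      rw [Finset.sum_image (fun a _ b _ hab => hjinj hab), Finset.sum_image hinj1]
      apply Finset.sum_congr rfl
      intro k hk
      have hk' := (Finset.mem_filter.mp hk).2
      simp only [x, if_neg hk']
    have h0' : ∑ n ∈ (P.filter (fun k => k % 2 = 0)).image (· / 2), w n
        = ∑ i ∈ ((P.filter (fun k => k % 2 = 0)).image (· / 2)).biUnion c, y i := by
      rw [Finset.sum_biUnion]
      · exact Finset.sum_congr rfl (fun n _ => hweq n)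
      · intro i _ k _ hik
        exact hcdisj i k hik
    have hdisj2 : Disjoint (((P.filter (fun k => k % 2 = 0)).image (· / 2)).biUnion c)
        (((P.filter (fun k => ¬ k % 2 = 0)).image (· / 2)).image j) := by
      rw [Finset.disjoint_right]
      rintro i hi1 hi2
      obtain ⟨k, _, rfl⟩ := Finset.mem_image.mp hi1
      obtain ⟨n, _, hin⟩ := Finset.mem_biUnion.mp hi2
      exact hjavoid k n hin
    have htotal : ∑ k ∈ P, x k
        = ∑ i ∈ (((P.filter (fun k => k % 2 = 0)).image (· / 2)).biUnion c
            ∪ ((P.filter (fun k => ¬ k % 2 = 0)).image (· / 2)).image j), y i := by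
      rw [Finset.sum_union hdisj2, hsplit, h0, h0', h1]
    refine ⟨_, ?_, htotal⟩
    -- nonemptiness
    obtain ⟨k, hk⟩ := hPne
    by_cases hpar : k % 2 = 0
    · have hk2 : k / 2 ∈ (P.filter (fun k => k % 2 = 0)).image (· / 2) :=
        Finset.mem_image.mpr ⟨k, Finset.mem_filter.mpr ⟨hk, hpar⟩, rfl⟩
      obtain ⟨i, hi⟩ := hcne (k / 2)
      exact ⟨i, Finset.mem_union.mpr (Or.inl (Finset.mem_biUnion.mpr ⟨k / 2, hk2, hi⟩))⟩
    · have hk2 : k / 2 ∈ (P.filter (fun k => ¬ k % 2 = 0)).image (· / 2) :=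
        Finset.mem_image.mpr ⟨k, Finset.mem_filter.mpr ⟨hk, hpar⟩, rfl⟩
      exact ⟨j (k / 2), Finset.mem_union.mpr (Or.inr (Finset.mem_image.mpr ⟨k / 2, hk2, rfl⟩))⟩
  · -- FS (x ∘ f) ∈ p
    rw [hxfw]
    exact hwp
end

section
/- For a sequence x : ℕ → G on an abelian group G, the following are equivalent: (i) x satisfies the 2-uniqueness of finite sums; (ii) whenever a, b, c, d are finite subsets of ℕ with a ∩ b = ∅ = c ∩ d and 2·∑_{n∈a} x_n + ∑_{n∈b} x_n = 2·∑_{n∈c} x_n + ∑_{n∈d} x_n, then a = c and b = d; (iii) whenever a, b, c, d are finite subsets of ℕ with ∑_{n∈a} x_n + ∑_{n∈b} x_n = ∑_{n∈c} x_n + ∑_{n∈d} x_n, then a △ b = c △ d and a ∩ b = c ∩ d (where △ denotes symmetric difference). -/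
open scoped BigOperators

private lemma pairSum {G : Type*} [AddCommGroup G] (x : ℕ → G) (a b : Finset ℕ) :
    ∑ n ∈ a, x n + ∑ n ∈ b, x n = 2 • ∑ n ∈ a ∩ b, x n + ∑ n ∈ symmDiff a b, x n := by
  have h1 : symmDiff a b ∪ (a ∩ b) = a ∪ b := symmDiff_sup_inf a b
  have h2 : Disjoint (symmDiff a b) (a ∩ b) := disjoint_symmDiff_inf a b
  rw [← Finset.sum_union_inter, ← h1, Finset.sum_union h2, two_smul]
  abel

private lemma coefSum {G : Type*} [AddCommGroup G] (x : ℕ → G) (a : Finset ℕ) (ε : ℕ → ℕ)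
    (h : ∀ n ∈ a, ε n = 1 ∨ ε n = 2) :
    ∑ n ∈ a, ε n • x n
      = 2 • ∑ n ∈ a.filter (fun n => ε n = 2), x n
        + ∑ n ∈ a.filter (fun n => ¬ ε n = 2), x n := by
  rw [← Finset.sum_filter_add_sum_filter_not a (fun n => ε n = 2)]
  congr 1
  · rw [Finset.smul_sum]
    refine Finset.sum_congr rfl fun n hn => ?_
    rw [(Finset.mem_filter.mp hn).2]
  · refine Finset.sum_congr rfl fun n hn => ?_
    obtain ⟨hna, hn2⟩ := Finset.mem_filter.mp hn
    rcases h n hna with h1 | h2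
    · rw [h1, one_smul]
    · exact absurd h2 hn2

private lemma i_iff_ii {G : Type*} [AddCommGroup G] (x : ℕ → G) :
    TwoUniqFS x ↔
      ∀ a b c d : Finset ℕ, Disjoint a b → Disjoint c d →
        2 • ∑ n ∈ a, x n + ∑ n ∈ b, x n = 2 • ∑ n ∈ c, x n + ∑ n ∈ d, x n →
        a = c ∧ b = d := by
  constructor
  · intro H a b c d hab hcd hsum
    set ε : ℕ → ℕ := fun n => if n ∈ a then 2 else 1 with hε
    set δ : ℕ → ℕ := fun n => if n ∈ c then 2 else 1 with hδ
    have key : ∀ (s t : Finset ℕ), Disjoint s t → ∀ (f : ℕ → ℕ), (f = fun n => if n ∈ s then 2 else 1) →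
        ∑ n ∈ s ∪ t, f n • x n = 2 • ∑ n ∈ s, x n + ∑ n ∈ t, x n := by
      intro s t hst f hf
      rw [Finset.sum_union hst]
      congr 1
      · rw [Finset.smul_sum]
        refine Finset.sum_congr rfl fun n hn => by simp [hf, hn]
      · refine Finset.sum_congr rfl fun n hn => by
          simp [hf, Finset.disjoint_right.mp hst hn]
    have h1 := key a b hab ε hε
    have h2 := key c d hcd δ hδ
    obtain ⟨hset, hcoef⟩ := H (a ∪ b) (c ∪ d) ε δ
      (fun n _ => by by_cases h : n ∈ a <;> simp [hε, h])
      (fun n _ => by by_cases h : n ∈ c <;> simp [hδ, h])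
      (by rw [h1, h2, hsum])
    constructor
    · ext n
      constructor
      · intro hn
        have hnu : n ∈ a ∪ b := Finset.mem_union_left _ hn
        have := hcoef n hnu
        by_contra hnc
        have hnd : n ∈ d := by
          have := hset ▸ hnu
          rcases Finset.mem_union.mp this with h | h
          · exact absurd h hnc
          · exact h
        simp [hε, hδ, hn, hnc] at this
      · intro hn
        have hnu : n ∈ c ∪ d := Finset.mem_union_left _ hn
        have hnu' : n ∈ a ∪ b := hset ▸ hnu
        have := hcoef n hnu'
        by_contra hna
        simp [hε, hδ, hna, hn, Finset.disjoint_left.mp hcd hn] at this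
    · ext n
      constructor
      · intro hn
        have hna : n ∉ a := Finset.disjoint_right.mp hab hn
        have hnu : n ∈ a ∪ b := Finset.mem_union_right _ hn
        have := hcoef n hnu
        have hnc : n ∉ c := by
          intro hc
          simp [hε, hδ, hna, hc] at this
        rcases Finset.mem_union.mp (hset ▸ hnu) with h | h
        · exact absurd h hnc
        · exact h
      · intro hn
        have hnc : n ∉ c := Finset.disjoint_right.mp hcd hn
        have hnu : n ∈ c ∪ d := Finset.mem_union_right _ hn
        have hnu' : n ∈ a ∪ b := hset ▸ hnu
        have := hcoef n hnu'
        have hna : n ∉ a := by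
          intro ha
          simp [hε, hδ, ha, hnc] at this
        rcases Finset.mem_union.mp hnu' with h | h
        · exact absurd h hna
        · exact h
  · intro H a b ε δ hε hδ hsum
    have h1 := coefSum x a ε hε
    have h2 := coefSum x b δ hδ
    obtain ⟨h2eq, h1eq⟩ := H (a.filter (fun n => ε n = 2)) (a.filter (fun n => ¬ ε n = 2))
      (b.filter (fun n => δ n = 2)) (b.filter (fun n => ¬ δ n = 2))
      (Finset.disjoint_filter_filter_not a a _)
      (Finset.disjoint_filter_filter_not b b _)
      (by rw [← h1, ← h2, hsum])
    have hab : a = b := by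
      rw [← Finset.filter_union_filter_not_eq (fun n => ε n = 2) a,
        ← Finset.filter_union_filter_not_eq (fun n => δ n = 2) b, h2eq, h1eq]
    refine ⟨hab, fun n hn => ?_⟩
    by_cases h2 : ε n = 2
    · have : n ∈ b.filter (fun n => δ n = 2) := h2eq ▸ Finset.mem_filter.mpr ⟨hn, h2⟩
      rw [h2, (Finset.mem_filter.mp this).2]
    · have : n ∈ b.filter (fun n => ¬ δ n = 2) := h1eq ▸ Finset.mem_filter.mpr ⟨hn, h2⟩
      have hδ2 := (Finset.mem_filter.mp this).2
      rcases hε n hn with he | he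
      · rcases hδ n (hab ▸ hn) with hd | hd
        · rw [he, hd]
        · exact absurd hd hδ2
      · exact absurd he h2

/-- Characterizations of the 2-uniqueness of finite sums:
(i) `TwoUniqFS x`;
(ii) whenever `a ∩ b = ∅ = c ∩ d` and `2∑_a x + ∑_b x = 2∑_c x + ∑_d x`,
then `a = c` and `b = d`;
(iii) whenever `∑_a x + ∑_b x = ∑_c x + ∑_d x`, then `a △ b = c △ d` and
`a ∩ b = c ∩ d`. -/
theorem twoUniqFS_characterizations {G : Type*} [AddCommGroup G] (x : ℕ → G) :
    (TwoUniqFS x ↔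
      ∀ a b c d : Finset ℕ, Disjoint a b → Disjoint c d →
        2 • ∑ n ∈ a, x n + ∑ n ∈ b, x n = 2 • ∑ n ∈ c, x n + ∑ n ∈ d, x n →
        a = c ∧ b = d) ∧
    (TwoUniqFS x ↔
      ∀ a b c d : Finset ℕ,
        ∑ n ∈ a, x n + ∑ n ∈ b, x n = ∑ n ∈ c, x n + ∑ n ∈ d, x n →
        symmDiff a b = symmDiff c d ∧ a ∩ b = c ∩ d) := by
  refine ⟨i_iff_ii x, (i_iff_ii x).trans ⟨?_, ?_⟩⟩
  · intro H a b c d hsum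
    rw [pairSum, pairSum] at hsum
    obtain ⟨h1, h2⟩ := H (a ∩ b) (symmDiff a b) (c ∩ d) (symmDiff c d)
      (disjoint_symmDiff_inf a b).symm (disjoint_symmDiff_inf c d).symm hsum
    exact ⟨h2, h1⟩
  · intro H a b c d hab hcd hsum
    have key : ∀ s t : Finset ℕ, Disjoint s t →
        ∑ n ∈ s ∪ t, x n + ∑ n ∈ s, x n = 2 • ∑ n ∈ s, x n + ∑ n ∈ t, x n := by
      intro s t hst
      rw [Finset.sum_union hst, two_smul]
      abel
    have hsd : ∀ s t : Finset ℕ, Disjoint s t → symmDiff (s ∪ t) s = t := by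
      intro s t hst
      ext n
      simp only [Finset.mem_symmDiff, Finset.mem_union]
      constructor
      · rintro (⟨h1 | h1, h2⟩ | ⟨h1, h2⟩)
        · exact absurd h1 h2
        · exact h1
        · exact absurd (Or.inl h1) h2
      · intro hn
        exact Or.inl ⟨Or.inr hn, Finset.disjoint_right.mp hst hn⟩
    have hin : ∀ s t : Finset ℕ, (s ∪ t) ∩ s = s := by
      intro s t
      ext n; simp only [Finset.mem_inter, Finset.mem_union]; tauto
    obtain ⟨h1, h2⟩ := H (a ∪ b) a (c ∪ d) c
      (by rw [key a b hab, key c d hcd, hsum])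
    rw [hsd a b hab, hsd c d hcd] at h1
    rw [hin a b, hin c d] at h2
    exact ⟨h2, h1⟩
end

section
/- Let G be an abelian group and let X = {x ∈ G : x has order 4}. If x : ℕ → G is a sequence such that FS(x) ⊆ X, then x satisfies the 2-uniqueness of finite sums. -/
open scoped BigOperators

lemma four_smul_sum {G : Type*} [AddCommGroup G] (x : ℕ → G)
    (h : FS x ⊆ {g : G | addOrderOf g = 4}) (B : Finset ℕ) (hB : B.Nonempty) :
    (4 : ℤ) • (∑ n ∈ B, x n) = 0 := by
  have ho : addOrderOf (∑ n ∈ B, x n) = 4 := h ⟨B, hB, rfl⟩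
  have h4 : (4 : ℕ) • (∑ n ∈ B, x n) = 0 := by
    have := addOrderOf_nsmul_eq_zero (∑ n ∈ B, x n)
    rwa [ho] at this
  rw [show (4 : ℤ) = ((4 : ℕ) : ℤ) by norm_num, natCast_zsmul]
  exact h4

lemma two_smul_sum_ne {G : Type*} [AddCommGroup G] (x : ℕ → G)
    (h : FS x ⊆ {g : G | addOrderOf g = 4}) (B : Finset ℕ) (hB : B.Nonempty) :
    (2 : ℤ) • (∑ n ∈ B, x n) ≠ 0 := by
  intro hz
  have ho : addOrderOf (∑ n ∈ B, x n) = 4 := h ⟨B, hB, rfl⟩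
  have h2 : (2 : ℕ) • (∑ n ∈ B, x n) = 0 := by
    rw [show (2 : ℤ) = ((2 : ℕ) : ℤ) by norm_num, natCast_zsmul] at hz
    exact hz
  have hdvd := addOrderOf_dvd_of_nsmul_eq_zero h2
  rw [ho] at hdvd
  omega

lemma four_smul_single {G : Type*} [AddCommGroup G] (x : ℕ → G)
    (h : FS x ⊆ {g : G | addOrderOf g = 4}) (n : ℕ) : (4 : ℤ) • x n = 0 := by
  have := four_smul_sum x h {n} ⟨n, Finset.mem_singleton_self n⟩
  simpa using this

lemma zero_comb {G : Type*} [AddCommGroup G] (x : ℕ → G)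
    (h : FS x ⊆ {g : G | addOrderOf g = 4}) (A : Finset ℕ) (α : ℕ → ℤ)
    (hα : ∀ n ∈ A, α n = 1 ∨ α n = 2 ∨ α n = 3)
    (hsum : ∑ n ∈ A, α n • x n = 0) : A = ∅ := by
  -- multiply by 2
  have key : (2 : ℤ) • ∑ n ∈ A.filter (fun n => α n ≠ 2), x n = 0 := by
    have h2 : ∑ n ∈ A, (2 * α n) • x n = 0 := by
      calc ∑ n ∈ A, (2 * α n) • x n = (2:ℤ) • ∑ n ∈ A, α n • x n := by
            rw [Finset.smul_sum]; exact Finset.sum_congr rfl fun n _ => (mul_smul 2 (α n) (x n))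
        _ = 0 := by rw [hsum, smul_zero]
    have h2' : ∑ n ∈ A, (if α n ≠ 2 then (2:ℤ) • x n else 0) = 0 := by
      have hcg : ∑ n ∈ A, (if α n ≠ 2 then (2:ℤ) • x n else 0) =
          ∑ n ∈ A, (2 * α n) • x n := by
        refine Finset.sum_congr rfl fun n hn => ?_
        rcases hα n hn with h1 | h1 | h1
        · rw [h1, if_pos (by norm_num)]; norm_num
        · rw [h1, if_neg (by norm_num), show (2 * 2 : ℤ) = 4 by norm_num,
            four_smul_single x h]
        · rw [h1, if_pos (by norm_num), show (2 * 3 : ℤ) = 4 + 2 by norm_num,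
            add_smul, four_smul_single x h, zero_add]
      rw [hcg]; exact h2
    rw [Finset.smul_sum]
    rw [Finset.sum_filter]
    exact h2'
  have hfe : A.filter (fun n => α n ≠ 2) = ∅ := by
    by_contra hne
    exact two_smul_sum_ne x h _ (Finset.nonempty_of_ne_empty hne) key
  have hall2 : ∀ n ∈ A, α n = 2 := by
    intro n hn
    by_contra hne
    have : n ∈ A.filter (fun n => α n ≠ 2) := Finset.mem_filter.mpr ⟨hn, hne⟩
    simp [hfe] at this
  have h2A : (2 : ℤ) • ∑ n ∈ A, x n = 0 := by
    rw [Finset.smul_sum, ← hsum]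
    exact Finset.sum_congr rfl fun n hn => by rw [hall2 n hn]
  by_contra hne
  exact two_smul_sum_ne x h A (Finset.nonempty_of_ne_empty hne) h2A

/-- If all finite sums of the sequence `x` have order 4, then `x` satisfies the
2-uniqueness of finite sums. -/
theorem twoUniqFS_of_FS_subset_order_four {G : Type*} [AddCommGroup G] (x : ℕ → G)
    (h : FS x ⊆ {g : G | addOrderOf g = 4}) :
    TwoUniqFS x := by
  intro a b ε δ hε hδ heq
  set c : ℕ → ℤ := fun n => (if n ∈ a then (ε n : ℤ) else 0) - (if n ∈ b then (δ n : ℤ) else 0)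
    with hc
  have hsum0 : ∑ n ∈ a ∪ b, c n • x n = 0 := by
    have : ∑ n ∈ a ∪ b, c n • x n =
        (∑ n ∈ a ∪ b, (if n ∈ a then (ε n : ℤ) • x n else 0)) -
        (∑ n ∈ a ∪ b, (if n ∈ b then (δ n : ℤ) • x n else 0)) := by
      rw [← Finset.sum_sub_distrib]
      refine Finset.sum_congr rfl fun n hn => ?_
      simp only [hc, sub_smul]
      congr 1 <;> split <;> simp
    rw [this, Finset.sum_ite_mem, Finset.sum_ite_mem, Finset.union_inter_cancel_left,
      Finset.union_inter_cancel_right, sub_eq_zero]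
    calc ∑ n ∈ a, (ε n : ℤ) • x n = ∑ n ∈ a, ε n • x n := by
          exact Finset.sum_congr rfl fun n _ => natCast_zsmul (x n) (ε n)
      _ = ∑ n ∈ b, δ n • x n := heq
      _ = ∑ n ∈ b, (δ n : ℤ) • x n := by
          exact (Finset.sum_congr rfl fun n _ => natCast_zsmul (x n) (δ n)).symm
  set A := (a ∪ b).filter (fun n => c n ≠ 0) with hA
  have hcval : ∀ n ∈ A, c n = -2 ∨ c n = -1 ∨ c n = 1 ∨ c n = 2 := by
    intro n hn
    rw [hA, Finset.mem_filter] at hn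
    obtain ⟨hmem, hne⟩ := hn
    simp only [hc] at hne ⊢
    by_cases ha : n ∈ a <;> by_cases hb : n ∈ b
    · rcases hε n ha with h1 | h1 <;> rcases hδ n hb with h2 | h2 <;>
        simp [ha, hb, h1, h2] at hne ⊢
    · rcases hε n ha with h1 | h1 <;> simp [ha, hb, h1]
    · rcases hδ n hb with h2 | h2 <;> simp [ha, hb, h2]
    · simp [ha, hb] at hne
  have hAempty : A = ∅ := by
    apply zero_comb x h A (fun n => c n % 4)
    · intro n hn
      rcases hcval n hn with h1 | h1 | h1 | h1 <;> rw [h1] <;> decide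
    · have heqsmul : ∀ n ∈ A, (c n % 4) • x n = c n • x n := by
        intro n _
        conv_rhs => rw [show c n = 4 * (c n / 4) + c n % 4 from (Int.mul_ediv_add_emod _ _).symm]
        rw [add_smul, mul_comm, mul_smul, four_smul_single x h, smul_zero, zero_add]
      rw [Finset.sum_congr rfl heqsmul]
      rw [hA, Finset.sum_filter_of_ne (fun n _ hne => ?_)]
      · exact hsum0
      · intro hc0
        rw [hc0, zero_smul] at hne
        exact hne rfl
  have hc0 : ∀ n ∈ a ∪ b, c n = 0 := by
    intro n hn
    by_contra hne
    have : n ∈ A := Finset.mem_filter.mpr ⟨hn, hne⟩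
    simp [hAempty] at this
  have hab : a = b := by
    ext n
    constructor
    · intro hna
      by_contra hnb
      have := hc0 n (Finset.mem_union_left _ hna)
      simp only [hc, hna, hnb, if_true, if_false, sub_zero] at this
      rcases hε n hna with h1 | h1 <;> simp [h1] at this
    · intro hnb
      by_contra hna
      have := hc0 n (Finset.mem_union_right _ hnb)
      simp only [hc, hna, hnb, if_true, if_false, zero_sub, neg_eq_zero] at this
      rcases hδ n hnb with h1 | h1 <;> simp [h1] at this
  refine ⟨hab, fun n hn => ?_⟩
  have hnb : n ∈ b := hab ▸ hn
  have := hc0 n (Finset.mem_union_left _ hn)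
  simp only [hc, hn, hnb, if_true, sub_eq_zero] at this
  exact_mod_cast this
end

section
/- Let p be a nonprincipal strongly summable ultrafilter on the Boolean group 𝔹 and let Z be an infinite linearly independent subset of 𝔹 with FS(Z) ∈ p. Then there is a set B ∈ p and an infinite subset W ⊆ Z such that FS(W) ∩ B = ∅. -/
open scoped BigOperators

/-- The countable Boolean group, realized as `ℕ →₀ ZMod 2` (equivalently, finite subsets
of ℕ under symmetric difference), a vector space over `𝔽₂ = ZMod 2`. -/
abbrev BoolGrp : Type := ℕ →₀ ZMod 2

/-- The set of finite sums (symmetric differences) of nonempty finite subsets of `X`. -/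
def FSset (X : Set BoolGrp) : Set BoolGrp :=
  {g | ∃ S : Finset BoolGrp, S.Nonempty ∧ ↑S ⊆ X ∧ g = ∑ v ∈ S, v}

/-- An ultrafilter `p` on the Boolean group is strongly summable if every `A ∈ p`
contains an FS-set, of an infinite set, belonging to `p`. -/
def StronglySummableSet (p : Ultrafilter BoolGrp) : Prop :=
  ∀ A ∈ p, ∃ X : Set BoolGrp, X.Infinite ∧ FSset X ∈ p ∧ FSset X ⊆ A

/-
Split `Z` into two disjoint infinite halves `W₁`, `W₂`. By linear independence a vector
cannot be a sum over a nonempty subset of `W₁` and over a subset of `W₂` at once, so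
`FS(W₁)` and `FS(W₂)` are disjoint; hence one of them is not in `p`, and its complement
is the required `B`.
-/

theorem Set.Infinite.exists_disjoint_infinite_subsets {α : Type*} {s : Set α}
    (hs : s.Infinite) :
    ∃ t ⊆ s, ∃ u ⊆ s, Disjoint t u ∧ t.Infinite ∧ u.Infinite := by
  obtain ⟨t, u, rfl, htu, hcard⟩ := hs.exists_union_disjoint_cardinal_eq_of_infinite
  have ht_iff_hu : t.Infinite ↔ u.Infinite := by
    rw [← Set.infinite_coe_iff, ← Set.infinite_coe_iff, Cardinal.infinite_iff,
      Cardinal.infinite_iff, hcard]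
  have ht : t.Infinite := by
    rcases Set.infinite_union.mp hs with ht | hu
    exacts [ht, ht_iff_hu.mpr hu]
  exact ⟨t, Set.subset_union_left, u, Set.subset_union_right, htu, ht, ht_iff_hu.mp ht⟩

theorem LinearIndepOn.finset_sum_ne_zero {R M : Type*} [Ring R] [Nontrivial R]
    [AddCommGroup M] [Module R M] {s : Set M} (hs : LinearIndepOn R id s) {S : Finset M}
    (hSs : ↑S ⊆ s) (hS : S.Nonempty) : ∑ v ∈ S, v ≠ 0 := by
  obtain ⟨x, hx⟩ := hS
  intro hsum
  have hS_indep : LinearIndependent R ((↑) : S → M) := hs.mono hSs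
  have hx_coeff := Fintype.linearIndependent_iff.mp hS_indep (fun _ => 1)
    (by simpa only [one_smul] using (S.sum_coe_sort fun v => v).trans hsum) ⟨x, hx⟩
  exact one_ne_zero hx_coeff

theorem disjoint_FSset_of_linearIndepOn {Z W₁ W₂ : Set BoolGrp}
    (hZ : LinearIndepOn (ZMod 2) id Z) (h₁ : W₁ ⊆ Z) (h₂ : W₂ ⊆ Z) (hW : Disjoint W₁ W₂) :
    Disjoint (FSset W₁) (FSset W₂) := by
  classical
  rw [Set.disjoint_left]
  rintro _ ⟨S₁, hS₁, hS₁W, rfl⟩ ⟨S₂, -, hS₂W, hsum⟩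
  have hS : Disjoint S₁ S₂ := by
    rw [← Finset.disjoint_coe]
    exact hW.mono hS₁W hS₂W
  refine hZ.finset_sum_ne_zero (S := S₁ ∪ S₂) ?_ (hS₁.mono Finset.subset_union_left) ?_
  · rw [Finset.coe_union]
    exact Set.union_subset (hS₁W.trans h₁) (hS₂W.trans h₂)
  · rw [Finset.sum_union hS, ← hsum, ZModModule.add_self]

theorem exists_infinite_subfamily_FS_disjoint_general (p : Ultrafilter BoolGrp)
    (Z : Set BoolGrp) (hZinf : Z.Infinite)
    (hZli : LinearIndependent (ZMod 2) ((↑) : Z → BoolGrp)) :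
    ∃ B ∈ p, ∃ W ⊆ Z, W.Infinite ∧ FSset W ∩ B = ∅ := by
  obtain ⟨W₁, hW₁Z, W₂, hW₂Z, hW, hW₁, hW₂⟩ := hZinf.exists_disjoint_infinite_subsets
  have hFS : Disjoint (FSset W₁) (FSset W₂) :=
    disjoint_FSset_of_linearIndepOn hZli hW₁Z hW₂Z hW
  by_cases h₁ : FSset W₁ ∈ p
  · exact ⟨(FSset W₂)ᶜ, p.mem_of_superset h₁ hFS.subset_compl_right, W₂, hW₂Z, hW₂,
      Set.inter_compl_self _⟩
  · exact ⟨(FSset W₁)ᶜ, Ultrafilter.compl_mem_iff_notMem.mpr h₁, W₁, hW₁Z, hW₁,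
      Set.inter_compl_self _⟩

/-- Let `p` be a nonprincipal strongly summable ultrafilter on the Boolean group and `Z`
an infinite linearly independent set with `FS(Z) ∈ p`. Then there are `B ∈ p` and an
infinite `W ⊆ Z` with `FS(W) ∩ B = ∅`. -/
theorem exists_infinite_subfamily_FS_disjoint (p : Ultrafilter BoolGrp)
    (hss : StronglySummableSet p) (hnp : ∀ b : BoolGrp, p ≠ pure b)
    (Z : Set BoolGrp) (hZinf : Z.Infinite)
    (hZli : LinearIndependent (ZMod 2) ((↑) : Z → BoolGrp))
    (hFZ : FSset Z ∈ p) :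
    ∃ B ∈ p, ∃ W ⊆ Z, W.Infinite ∧ FSset W ∩ B = ∅ :=
  exists_infinite_subfamily_FS_disjoint_general p Z hZinf hZli
end

section
/- Let X and Z be linearly independent subsets of the Boolean group 𝔹 and let Y be suitable for X, with Z ⊆ FS(Y). If the elements of Z have pairwise disjoint X-supports, then FS(Z) is not (X,Y)-adequate (i.e. not ({(X,Y)}, m)-adequate for every m; indeed it is not ({(X,Y)}, 2)-adequate). -/
open scoped BigOperators

attribute [local instance] Classical.propDecidable

/-- The `X`-support of `y`: for linearly independent `X` and `y` in the span of `X`,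
the unique finite `S ⊆ X` with `y = ∑_{v ∈ S} v` (junk value `∅` otherwise). -/
noncomputable def Xsupp (X : Set BoolGrp) (y : BoolGrp) : Finset BoolGrp :=
  if h : ∃ S : Finset BoolGrp, ↑S ⊆ X ∧ y = ∑ v ∈ S, v then h.choose else ∅

/-- The `X`-support of a set `Y`: the union of the `X`-supports of its elements. -/
noncomputable def XsuppSet (X Y : Set BoolGrp) : Set BoolGrp :=
  ⋃ y ∈ Y, (Xsupp X y : Set BoolGrp)

/-- An `m`-witness for the suitability of `Y` for `X`: an `m`-sequence of elements of
`Y` whose `X`-supports pairwise intersect. -/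
def SuitWitness (X Y : Set BoolGrp) {m : ℕ} (y : Fin m → BoolGrp) : Prop :=
  (∀ i, y i ∈ Y) ∧ ∀ i j : Fin m, i < j →
    ((Xsupp X (y i) : Set BoolGrp) ∩ (Xsupp X (y j) : Set BoolGrp)).Nonempty

/-- `Y ⊆ FS(X)` is suitable for (linearly independent) `X` if (i) for each `m` there is
an `m`-witness for suitability, and (ii) whenever the `X`-supports of `y, y' ∈ Y` (not
necessarily distinct) intersect, the intersection is not covered by the `X`-support of
`Y \ {y, y'}`. -/
def Suitable (X Y : Set BoolGrp) : Prop :=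
  Y ⊆ FSset X ∧
  (∀ m : ℕ, ∃ y : Fin m → BoolGrp, SuitWitness X Y y) ∧
  ∀ y ∈ Y, ∀ y' ∈ Y,
    ((Xsupp X y : Set BoolGrp) ∩ (Xsupp X y' : Set BoolGrp)).Nonempty →
    (((Xsupp X y : Set BoolGrp) ∩ (Xsupp X y' : Set BoolGrp)) \
      XsuppSet X (Y \ {y, y'})).Nonempty

/-- The set of finite sums of a finite sequence `a : Fin m → BoolGrp`. -/
def FSfin {m : ℕ} (a : Fin m → BoolGrp) : Set BoolGrp :=
  {g | ∃ s : Finset (Fin m), s.Nonempty ∧ g = ∑ j ∈ s, a j}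

/-- `a` is a `(𝒴, m)`-witness for the adequacy of `A`: for each `(X, Y) ∈ 𝒴`,
`FS(a) ⊆ A ∩ FS(Y)` and there is an `m`-witness `y` for the suitability of `Y` such that
for all distinct `j, k`, `y j ∈ Y-supp(a j)` and `y j ∉ Y-supp(a k)`. -/
def AdequateWitness (𝒴 : Set (Set BoolGrp × Set BoolGrp)) (A : Set BoolGrp)
    {m : ℕ} (a : Fin m → BoolGrp) : Prop :=
  ∀ XY ∈ 𝒴, FSfin a ⊆ A ∩ FSset XY.2 ∧
    ∃ y : Fin m → BoolGrp, SuitWitness XY.1 XY.2 y ∧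
      ∀ j k : Fin m, j ≠ k → y j ∈ Xsupp XY.2 (a j) ∧ y j ∉ Xsupp XY.2 (a k)

/-- `A` is `(𝒴, m)`-adequate if there is a `(𝒴, m)`-witness for its adequacy. -/
def Adequate (𝒴 : Set (Set BoolGrp × Set BoolGrp)) (m : ℕ) (A : Set BoolGrp) : Prop :=
  ∃ a : Fin m → BoolGrp, AdequateWitness 𝒴 A a

/-- `A` is `𝒳`-adequate if it is `(𝒴, m)`-adequate for every finite `𝒴 ⊆ 𝒳` and
every `m`. -/
def XAdequate (𝒳 : Set (Set BoolGrp × Set BoolGrp)) (A : Set BoolGrp) : Prop :=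
  ∀ 𝒴 ⊆ 𝒳, 𝒴.Finite → ∀ m : ℕ, Adequate 𝒴 m A

/-- A family of pairs `(X, Y)` with each `X` linearly independent and each `Y` suitable
for `X`. -/
def GoodFamily (𝒳 : Set (Set BoolGrp × Set BoolGrp)) : Prop :=
  ∀ XY ∈ 𝒳, LinearIndependent (ZMod 2) ((↑) : XY.1 → BoolGrp) ∧ Suitable XY.1 XY.2

/-!
Since `X` is linearly independent, each `x ∈ X` has a coordinate functional, so `x` lies in
the `X`-support of a sum iff it lies in the `X`-supports of an odd number of summands.

Let `a 0, a 1` witness adequacy with `y 0, y 1`. Suitability yields `x` lying in the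
`X`-supports of `y 0` and `y 1` and of no other element of `Y`; as `y j` is a `Y`-summand of
`a j` and `y (1 - j)` is not, `x` lies in the `X`-support of both `a j`. Writing each `a j`
as a sum of elements of `Z`, whose `X`-supports are disjoint, one `z ∈ Z` is a summand of
both, and one of `y 0`, `y 1`, say `y 0`, is a `Y`-summand of `z`. An element of `X` lying in
the `X`-support of `y 0` alone then passes from `z` to `a 1`, making `y 0` a `Y`-summand of
`a 1`: a contradiction.
-/

open Finset Submodule

theorem FSset_subset_span (X : Set BoolGrp) : FSset X ⊆ span (ZMod 2) X := by
  rintro _ ⟨S, -, hS, rfl⟩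
  exact sum_mem fun v hv => subset_span (hS hv)

theorem exists_finset_sum_eq_of_mem_span {X : Set BoolGrp} {g : BoolGrp}
    (hg : g ∈ span (ZMod 2) X) : ∃ S : Finset BoolGrp, ↑S ⊆ X ∧ g = ∑ v ∈ S, v := by
  obtain ⟨c, t, htX, -, rfl⟩ := mem_span_iff_exists_finset_subset.1 hg
  refine ⟨{v ∈ t | c v ≠ 0}, fun v hv => htX (mem_filter.1 hv).1, ?_⟩
  rw [sum_filter]
  refine sum_congr rfl fun v _ => ?_
  -- over `𝔽₂` the only nonzero coefficient is `1`
  rcases (by decide : ∀ e : ZMod 2, e = 0 ∨ e = 1) (c v) with h | h <;> simp [h]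

theorem Xsupp_subset (X : Set BoolGrp) (g : BoolGrp) : ↑(Xsupp X g) ⊆ X := by
  unfold Xsupp
  split_ifs with h
  exacts [h.choose_spec.1, by simp]

theorem sum_Xsupp {X : Set BoolGrp} {g : BoolGrp} (hg : g ∈ span (ZMod 2) X) :
    ∑ v ∈ Xsupp X g, v = g := by
  have h := exists_finset_sum_eq_of_mem_span hg
  rw [Xsupp, dif_pos h]
  exact h.choose_spec.2.symm

theorem apply_finset_sum_eq_ite {X : Set BoolGrp} {x : BoolGrp}
    {f : Module.Dual (ZMod 2) BoolGrp}
    (hf : ∀ v ∈ X, f v = if v = x then 1 else 0) {S : Finset BoolGrp} (hS : ↑S ⊆ X) :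
    f (∑ v ∈ S, v) = if x ∈ S then 1 else 0 := by
  rw [map_sum, sum_congr rfl fun v hv => hf v (hS hv), sum_ite_eq']

theorem apply_eq_ite_mem_Xsupp {X : Set BoolGrp} {x g : BoolGrp}
    {f : Module.Dual (ZMod 2) BoolGrp} (hf : ∀ v ∈ X, f v = if v = x then 1 else 0)
    (hg : g ∈ span (ZMod 2) X) : f g = if x ∈ Xsupp X g then 1 else 0 := by
  conv_lhs => rw [← sum_Xsupp hg]
  exact apply_finset_sum_eq_ite hf (Xsupp_subset X g)

section LinearIndependent

variable {X : Set BoolGrp} (hX : LinearIndependent (ZMod 2) ((↑) : X → BoolGrp))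
include hX

theorem exists_dual_apply_eq_ite {x : BoolGrp} (hx : x ∈ X) :
    ∃ f : Module.Dual (ZMod 2) BoolGrp, ∀ v ∈ X, f v = if v = x then 1 else 0 := by
  set b := Module.Basis.extend (linearIndependent_subtype_iff.1 hX)
  have hXb := Module.Basis.subset_extend (linearIndependent_subtype_iff.1 hX)
  refine ⟨b.coord ⟨x, hXb hx⟩, fun v hv => ?_⟩
  have hbv : b ⟨v, hXb hv⟩ = v := Module.Basis.extend_apply_self _ _
  conv_lhs => rw [← hbv, Module.Basis.coord_apply, Module.Basis.repr_self]
  simp [Finsupp.single_apply, eq_comm]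

theorem mem_Xsupp_sum_iff_odd {T : Finset BoolGrp}
    (hT : ↑T ⊆ (span (ZMod 2) X : Set BoolGrp)) {x : BoolGrp} :
    x ∈ Xsupp X (∑ w ∈ T, w) ↔ Odd #{w ∈ T | x ∈ Xsupp X w} := by
  by_cases hx : x ∈ X
  · obtain ⟨f, hf⟩ := exists_dual_apply_eq_ite hX hx
    have hsum := apply_eq_ite_mem_Xsupp hf (sum_mem hT)
    rw [map_sum, sum_congr rfl fun w hw => apply_eq_ite_mem_Xsupp hf (hT hw), sum_boole] at hsum
    split_ifs at hsum with h
    · simpa [h] using (ZMod.natCast_eq_one_iff_odd.1 hsum)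
    · simpa [h, Nat.not_odd_iff_even] using (ZMod.natCast_eq_zero_iff_even.1 hsum)
  · refine iff_of_false (fun h => hx (Xsupp_subset X _ h)) fun h => hx ?_
    obtain ⟨w, hw⟩ := card_pos.1 h.pos
    exact Xsupp_subset X w (mem_filter.1 hw).2

theorem Xsupp_finset_sum {S : Finset BoolGrp} (hS : ↑S ⊆ X) : Xsupp X (∑ v ∈ S, v) = S := by
  ext x
  by_cases hx : x ∈ X
  · obtain ⟨f, hf⟩ := exists_dual_apply_eq_ite hX hx
    have h := apply_eq_ite_mem_Xsupp hf (sum_mem fun v hv => subset_span (hS hv))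
    rw [apply_finset_sum_eq_ite hf hS] at h
    split_ifs at h <;> simp_all
  · exact iff_of_false (fun h => hx (Xsupp_subset X _ h)) fun h => hx (hS h)

theorem mem_Xsupp_sum_of_unique {T : Finset BoolGrp}
    (hT : ↑T ⊆ (span (ZMod 2) X : Set BoolGrp))
    {x w₀ : BoolGrp} (hw₀ : w₀ ∈ T) (hxw₀ : x ∈ Xsupp X w₀)
    (hx : ∀ w ∈ T, x ∈ Xsupp X w → w = w₀) : x ∈ Xsupp X (∑ w ∈ T, w) := by
  have : {w ∈ T | x ∈ Xsupp X w} = {w₀} :=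
    eq_singleton_iff_unique_mem.2
      ⟨mem_filter.2 ⟨hw₀, hxw₀⟩, fun w hw => hx w (mem_filter.1 hw).1 (mem_filter.1 hw).2⟩
  rw [mem_Xsupp_sum_iff_odd hX hT, this, card_singleton]
  exact odd_one

theorem exists_mem_Xsupp_of_mem_Xsupp_sum {T : Finset BoolGrp}
    (hT : ↑T ⊆ (span (ZMod 2) X : Set BoolGrp)) {x : BoolGrp}
    (hx : x ∈ Xsupp X (∑ w ∈ T, w)) : ∃ w ∈ T, x ∈ Xsupp X w := by
  obtain ⟨w, hw⟩ := card_pos.1 ((mem_Xsupp_sum_iff_odd hX hT).1 hx).pos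
  exact ⟨w, mem_filter.1 hw⟩

theorem mem_Xsupp_sum_of_pairwiseDisjoint {T : Finset BoolGrp}
    (hT : ↑T ⊆ (span (ZMod 2) X : Set BoolGrp))
    (hdisj : (T : Set BoolGrp).PairwiseDisjoint (Xsupp X))
    {x z : BoolGrp} (hz : z ∈ T) (hxz : x ∈ Xsupp X z) : x ∈ Xsupp X (∑ w ∈ T, w) :=
  mem_Xsupp_sum_of_unique hX hT hz hxz fun _ hw hxw =>
    by_contra fun hwz => disjoint_left.1 (hdisj hw hz hwz) hxw hxz

variable {Y : Set BoolGrp} (hYX : Y ⊆ span (ZMod 2) X)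
include hYX

theorem mem_Xsupp_of_mem_Xsupp_of_notMem_Xsupp {g y y' x : BoolGrp} (hg : g ∈ span (ZMod 2) Y)
    (hy : y ∈ Xsupp Y g) (hy' : y' ∉ Xsupp Y g) (hxy : x ∈ Xsupp X y)
    (hx : ∀ w ∈ Y, x ∈ Xsupp X w → w = y ∨ w = y') : x ∈ Xsupp X g := by
  rw [← sum_Xsupp hg]
  refine mem_Xsupp_sum_of_unique hX ((Xsupp_subset Y g).trans hYX) hy hxy fun w hw hxw => ?_
  exact (hx w (Xsupp_subset Y g hw) hxw).resolve_right fun h => hy' (h ▸ hw)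

theorem exists_mem_Xsupp_of_mem_Xsupp {g x : BoolGrp} (hg : g ∈ span (ZMod 2) Y)
    (hx : x ∈ Xsupp X g) : ∃ w ∈ Xsupp Y g, x ∈ Xsupp X w := by
  rw [← sum_Xsupp hg] at hx
  exact exists_mem_Xsupp_of_mem_Xsupp_sum hX ((Xsupp_subset Y g).trans hYX) hx

theorem mem_Xsupp_iff_mem_Xsupp {g y x : BoolGrp} (hg : g ∈ span (ZMod 2) Y)
    (hxy : x ∈ Xsupp X y) (hx : ∀ w ∈ Y, x ∈ Xsupp X w → w = y) :
    x ∈ Xsupp X g ↔ y ∈ Xsupp Y g := by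
  refine ⟨fun h => ?_, fun h => ?_⟩
  · obtain ⟨w, hw, hxw⟩ := exists_mem_Xsupp_of_mem_Xsupp hX hYX hg h
    exact hx w (Xsupp_subset Y g hw) hxw ▸ hw
  · rw [← sum_Xsupp hg]
    exact mem_Xsupp_sum_of_unique hX ((Xsupp_subset Y g).trans hYX) h hxy
      fun w hw => hx w (Xsupp_subset Y g hw)

end LinearIndependent

namespace Suitable

variable {X Y : Set BoolGrp} (hY : Suitable X Y)
include hY

theorem subset_span : Y ⊆ span (ZMod 2) X := hY.1.trans (FSset_subset_span X)

theorem exists_mem_Xsupp_inter {y y' : BoolGrp} (hy : y ∈ Y) (hy' : y' ∈ Y)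
    (h : ((Xsupp X y : Set BoolGrp) ∩ Xsupp X y').Nonempty) :
    ∃ x ∈ Xsupp X y, x ∈ Xsupp X y' ∧ ∀ w ∈ Y, x ∈ Xsupp X w → w = y ∨ w = y' := by
  obtain ⟨x, ⟨hxy, hxy'⟩, hx⟩ := hY.2.2 y hy y' hy' h
  refine ⟨x, hxy, hxy', fun w hw hxw => by_contra fun hne => hx (Set.mem_biUnion ?_ hxw)⟩
  simpa [hw] using hne

theorem exists_mem_Xsupp_unique (hX : LinearIndependent (ZMod 2) ((↑) : X → BoolGrp))
    {y : BoolGrp} (hy : y ∈ Y) : ∃ x ∈ Xsupp X y, ∀ w ∈ Y, x ∈ Xsupp X w → w = y := by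
  obtain ⟨S, hS, hSX, rfl⟩ := hY.1 hy
  obtain ⟨x, hx⟩ := hS
  rw [← Xsupp_finset_sum hX hSX] at hx
  obtain ⟨x', hx', -, h⟩ := hY.exists_mem_Xsupp_inter hy hy ⟨x, hx, hx⟩
  exact ⟨x', hx', fun w hw hxw => (h w hw hxw).elim id id⟩

theorem mem_Xsupp_sum_of_mem_Xsupp (hX : LinearIndependent (ZMod 2) ((↑) : X → BoolGrp))
    {S : Finset BoolGrp} (hS : ↑S ⊆ (span (ZMod 2) Y : Set BoolGrp))
    (hdisj : (S : Set BoolGrp).PairwiseDisjoint (Xsupp X)) {y z : BoolGrp} (hy : y ∈ Y)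
    (hz : z ∈ S) (hyz : y ∈ Xsupp Y z) : y ∈ Xsupp Y (∑ w ∈ S, w) := by
  obtain ⟨x, hxy, hx⟩ := hY.exists_mem_Xsupp_unique hX hy
  have key : ∀ g ∈ span (ZMod 2) Y, x ∈ Xsupp X g ↔ y ∈ Xsupp Y g :=
    fun g hg => mem_Xsupp_iff_mem_Xsupp hX hY.subset_span hg hxy hx
  rw [← key _ (sum_mem hS)]
  exact mem_Xsupp_sum_of_pairwiseDisjoint hX (fun w hw => span_le.2 hY.subset_span (hS hw))
    hdisj hz ((key z (hS hz)).2 hyz)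

variable (hX : LinearIndependent (ZMod 2) ((↑) : X → BoolGrp)) {Z : Set BoolGrp}
  (hZY : Z ⊆ span (ZMod 2) Y) (hdisj : Z.PairwiseDisjoint (Xsupp X))
include hX hZY hdisj

theorem mem_Xsupp_of_mem_FSset {g z x w : BoolGrp} (hg : g ∈ FSset Z) (hz : z ∈ Z)
    (hxg : x ∈ Xsupp X g) (hxz : x ∈ Xsupp X z) (hw : w ∈ Y) (hwz : w ∈ Xsupp Y z) :
    w ∈ Xsupp Y g := by
  obtain ⟨S, -, hSZ, rfl⟩ := hg
  obtain ⟨z', hz'S, hxz'⟩ := exists_mem_Xsupp_of_mem_Xsupp_sum hX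
    (fun v hv => span_le.2 hY.subset_span (hZY (hSZ hv))) hxg
  obtain rfl := hdisj.elim_finset hz (hSZ hz'S) x hxz hxz'
  exact hY.mem_Xsupp_sum_of_mem_Xsupp hX (hSZ.trans hZY) (hdisj.subset hSZ) hw hz'S hwz

theorem exists_mem_Xsupp_inter_of_mem_FSset {g₀ g₁ x : BoolGrp} (hg₀ : g₀ ∈ FSset Z)
    (hg₁ : g₁ ∈ FSset Z) (hx₀ : x ∈ Xsupp X g₀) (hx₁ : x ∈ Xsupp X g₁) :
    ∃ w ∈ Y, x ∈ Xsupp X w ∧ w ∈ Xsupp Y g₀ ∧ w ∈ Xsupp Y g₁ := by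
  obtain ⟨S, -, hSZ, hS⟩ := id hg₀
  obtain ⟨z, hzS, hxz⟩ := exists_mem_Xsupp_of_mem_Xsupp_sum hX
    (fun v hv => span_le.2 hY.subset_span (hZY (hSZ hv))) (hS ▸ hx₀)
  obtain ⟨w, hwz, hxw⟩ := exists_mem_Xsupp_of_mem_Xsupp hX hY.subset_span (hZY (hSZ hzS)) hxz
  have hw := Xsupp_subset Y z hwz
  exact ⟨w, hw, hxw, hY.mem_Xsupp_of_mem_FSset hX hZY hdisj hg₀ (hSZ hzS) hx₀ hxz hw hwz,
    hY.mem_Xsupp_of_mem_FSset hX hZY hdisj hg₁ (hSZ hzS) hx₁ hxz hw hwz⟩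

end Suitable

theorem not_adequate_of_pairwiseDisjoint_supports_general (X Y Z : Set BoolGrp)
    (hX : LinearIndependent (ZMod 2) ((↑) : X → BoolGrp))
    (hY : Suitable X Y) (hZY : Z ⊆ FSset Y)
    (hdisj : ∀ z ∈ Z, ∀ z' ∈ Z, z ≠ z' → Disjoint (Xsupp X z) (Xsupp X z')) :
    ¬ Adequate {(X, Y)} 2 (FSset Z) := by
  rintro ⟨a, ha⟩
  obtain ⟨hFS, y, ⟨hyY, hy_inter⟩, hy⟩ := ha (X, Y) rfl
  have h01 := hy 0 1 zero_ne_one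
  have h10 := hy 1 0 one_ne_zero
  have ha_mem : ∀ j, a j ∈ FSset Z ∩ FSset Y :=
    fun j => hFS ⟨{j}, singleton_nonempty j, (sum_singleton a j).symm⟩
  obtain ⟨x, hx₀, hx₁, hx⟩ :=
    hY.exists_mem_Xsupp_inter (hyY 0) (hyY 1) (hy_inter 0 1 zero_lt_one)
  have hxa₀ := mem_Xsupp_of_mem_Xsupp_of_notMem_Xsupp hX hY.subset_span
    (FSset_subset_span Y (ha_mem 0).2) h01.1 h10.2 hx₀ hx
  have hxa₁ := mem_Xsupp_of_mem_Xsupp_of_notMem_Xsupp hX hY.subset_span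
    (FSset_subset_span Y (ha_mem 1).2) h10.1 h01.2 hx₁ fun w hw hxw => (hx w hw hxw).symm
  obtain ⟨w, hw, hxw, hw₀, hw₁⟩ := hY.exists_mem_Xsupp_inter_of_mem_FSset hX
    (hZY.trans (FSset_subset_span Y)) hdisj (ha_mem 0).1 (ha_mem 1).1 hxa₀ hxa₁
  obtain rfl | rfl := hx w hw hxw
  exacts [h01.2 hw₁, h10.2 hw₀]

/-- If `X`, `Z` are linearly independent, `Y` is suitable for `X`, `Z ⊆ FS(Y)`, and the
elements of `Z` have pairwise disjoint `X`-supports, then `FS(Z)` is not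
`({(X,Y)}, 2)`-adequate (in particular, not `(X,Y)`-adequate). -/
theorem not_adequate_of_pairwiseDisjoint_supports (X Y Z : Set BoolGrp)
    (hX : LinearIndependent (ZMod 2) ((↑) : X → BoolGrp))
    (hZ : LinearIndependent (ZMod 2) ((↑) : Z → BoolGrp))
    (hY : Suitable X Y) (hZY : Z ⊆ FSset Y)
    (hdisj : ∀ z ∈ Z, ∀ z' ∈ Z, z ≠ z' → Disjoint (Xsupp X z) (Xsupp X z')) :
    ¬ Adequate {(X, Y)} 2 (FSset Z) :=
  not_adequate_of_pairwiseDisjoint_supports_general X Y Z hX hY hZY hdisj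
end

section
/- Let 𝒴 = {(X_i, Y_i) : i<n} be a finite family where each X_i ⊆ 𝔹 is linearly independent and each Y_i is suitable for X_i, and let A ⊆ 𝔹. Let ⟨a_j : j<M⟩ be a (𝒴,M)-witness for the adequacy of A, and let ⟨b_i : i<m⟩ be an m-sequence of pairwise disjoint nonempty subsets of M. Define ⟨c_j : j<m⟩ by c_j = ∑_{k∈b_j} a_k. Then ⟨c_j : j<m⟩ is a (𝒴,m)-witness for the adequacy of A. -/
/-!
Suitability makes each `Y` linearly independent: condition (ii) for the pair `(y, y)` gives
`y` an element of its `X`-support lying in no other `X`-support, so no nonempty sum of elements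
of `Y` vanishes. Over `𝔽₂` the `Y`-support of `c_j = ∑_{k ∈ b_j} a_k` is then the set of
elements of `Y` lying in the `Y`-supports of an odd number of the `a_k` with `k ∈ b_j`.
Choosing `κ j ∈ b_j`, the witness element `y_{κ j}` lies in the `Y`-support of `a_{κ j}` and of
no other `a_k`, hence in that of `c_j` and not in that of `c_k` for `k ≠ j`; the `b_j` are
disjoint, so `κ` is injective and `y ∘ κ` is again a suitability witness.
-/

open scoped BigOperators

attribute [local instance] Classical.propDecidable

open Finset

section CharTwo

variable {G : Type*} [AddCommGroup G] [Module (ZMod 2) G]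

theorem nsmul_eq_ite_odd (n : ℕ) (x : G) : n • x = if Odd n then x else 0 := by
  induction n with
  | zero => simp
  | succ n ih =>
    rw [succ_nsmul, ih]
    by_cases hn : Odd n <;> simp [hn, Nat.odd_add_one, ZModModule.add_self]

theorem sum_sum_eq_sum_filter_odd {ι : Type*} [DecidableEq G] (t : Finset ι)
    (w : ι → Finset G) :
    ∑ k ∈ t, ∑ v ∈ w k, v =
      ∑ v ∈ (t.biUnion w).filter (fun v => Odd #{k ∈ t | v ∈ w k}), v := by
  have hw : ∀ k ∈ t, ∑ v ∈ w k, v = ∑ v ∈ t.biUnion w, if v ∈ w k then v else 0 := by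
    intro k hk
    rw [sum_ite_mem, inter_eq_right.mpr (subset_biUnion_of_mem w hk)]
  rw [sum_congr rfl hw, sum_comm, sum_filter]
  refine sum_congr rfl fun v _ => ?_
  rw [← sum_filter, sum_const, nsmul_eq_ite_odd]

theorem Finset.sum_add_sum_eq_sum_symmDiff [DecidableEq G] (S T : Finset G) :
    ∑ v ∈ S, v + ∑ v ∈ T, v = ∑ v ∈ symmDiff S T, v := by
  rw [symmDiff_def, sup_eq_union, sum_union disjoint_sdiff_sdiff,
    ← sum_inter_add_sum_sdiff S T, ← sum_inter_add_sum_sdiff T S,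
    inter_comm T S, add_add_add_comm, ZModModule.add_self, zero_add]

theorem LinearIndependent.sum_ne_zero {X : Set G}
    (hX : LinearIndependent (ZMod 2) ((↑) : X → G)) {D : Finset G} (hD : ↑D ⊆ X)
    (hne : D.Nonempty) : ∑ v ∈ D, v ≠ 0 := by
  intro hsum
  obtain ⟨v, hv⟩ := hne
  have hD' : LinearIndepOn (ZMod 2) id (D : Set G) :=
    (linearIndependent_subtype_iff.mp hX).mono hD
  exact one_ne_zero (linearIndepOn_finset_iff.mp hD' (fun _ => 1) (by simpa using hsum) v hv)

theorem linearIndependent_of_sum_ne_zero {X : Set G}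
    (hX : ∀ D : Finset G, ↑D ⊆ X → D.Nonempty → ∑ v ∈ D, v ≠ 0) :
    LinearIndependent (ZMod 2) ((↑) : X → G) := by
  refine linearIndependent_subtype_iff.mpr <| linearIndepOn_of_finite X fun t htX ht => ?_
  lift t to Finset G using ht
  refine linearIndepOn_finset_iff.mpr fun f hf v hv => ?_
  by_contra hfv
  have hone : ∀ c : ZMod 2, c ≠ 0 → c = 1 := by decide
  have hsupp : ∑ i ∈ t, f i • i = ∑ i ∈ t with f i ≠ 0, i := by
    rw [sum_filter]
    refine sum_congr rfl fun i _ => ?_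
    split_ifs with hi
    · rw [hone _ hi, one_smul]
    · rw [not_not.mp hi, zero_smul]
  exact hX _ (fun i hi => htX (mem_filter.mp hi).1) ⟨v, mem_filter.mpr ⟨hv, hfv⟩⟩
    (hsupp ▸ hf)

theorem LinearIndependent.eq_of_sum_eq_sum [DecidableEq G] {X : Set G}
    (hX : LinearIndependent (ZMod 2) ((↑) : X → G)) {S T : Finset G} (hS : ↑S ⊆ X)
    (hT : ↑T ⊆ X) (h : ∑ v ∈ S, v = ∑ v ∈ T, v) : S = T := by
  by_contra hST
  refine hX.sum_ne_zero (D := symmDiff S T) ?_ ?_ ?_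
  · rw [coe_symmDiff]
    exact symmDiff_le_sup.trans (by simpa using And.intro hS hT)
  · exact nonempty_iff_ne_empty.mpr (symmDiff_eq_bot.not.mpr hST)
  · rw [← sum_add_sum_eq_sum_symmDiff, h, ZModModule.add_self]

end CharTwo

section Supports

variable {X : Set BoolGrp}

theorem Xsupp_sum (hX : LinearIndependent (ZMod 2) ((↑) : X → BoolGrp)) {S : Finset BoolGrp}
    (hS : ↑S ⊆ X) : Xsupp X (∑ v ∈ S, v) = S := by
  have h : ∃ T : Finset BoolGrp, ↑T ⊆ X ∧ ∑ v ∈ S, v = ∑ v ∈ T, v := ⟨S, hS, rfl⟩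
  rw [Xsupp, dif_pos h]
  exact hX.eq_of_sum_eq_sum h.choose_spec.1 hS h.choose_spec.2.symm

theorem Xsupp_zero (hX : LinearIndependent (ZMod 2) ((↑) : X → BoolGrp)) : Xsupp X 0 = ∅ := by
  simpa using Xsupp_sum hX (S := ∅) (by simp)

theorem mem_Xsupp_sum_iff (hX : LinearIndependent (ZMod 2) ((↑) : X → BoolGrp)) {ι : Type*}
    {t : Finset ι} {a : ι → BoolGrp} (ha : ∀ k ∈ t, a k ∈ FSset X) (v : BoolGrp) :
    v ∈ Xsupp X (∑ k ∈ t, a k) ↔ Odd #{k ∈ t | v ∈ Xsupp X (a k)} := by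
  have hsupp : ∀ k ∈ t, ↑(Xsupp X (a k)) ⊆ X ∧ ∑ v ∈ Xsupp X (a k), v = a k := by
    intro k hk
    obtain ⟨S, -, hS, hSa⟩ := ha k hk
    rw [hSa, Xsupp_sum hX hS]
    exact ⟨hS, rfl⟩
  have hsum : ∑ k ∈ t, a k = ∑ v ∈ (t.biUnion fun k => Xsupp X (a k)).filter
      (fun v => Odd #{k ∈ t | v ∈ Xsupp X (a k)}), v := by
    rw [← sum_sum_eq_sum_filter_odd]
    exact sum_congr rfl fun k hk => (hsupp k hk).2.symm
  have hsub : ↑((t.biUnion fun k => Xsupp X (a k)).filter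
      (fun v => Odd #{k ∈ t | v ∈ Xsupp X (a k)})) ⊆ X := by
    intro w hw
    obtain ⟨k, hk, hwk⟩ := mem_biUnion.mp (mem_filter.mp hw).1
    exact (hsupp k hk).1 hwk
  rw [hsum, Xsupp_sum hX hsub, mem_filter, mem_biUnion, and_iff_right_iff_imp]
  intro hodd
  obtain ⟨k, hk⟩ := card_pos.mp hodd.pos
  exact ⟨k, mem_filter.mp hk⟩

theorem mem_Xsupp_sum_of_forall_ne (hX : LinearIndependent (ZMod 2) ((↑) : X → BoolGrp))
    {ι : Type*} {t : Finset ι} {a : ι → BoolGrp} (ha : ∀ k ∈ t, a k ∈ FSset X) {k₀ : ι}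
    (hk₀ : k₀ ∈ t) {v : BoolGrp} (hv : v ∈ Xsupp X (a k₀))
    (hne : ∀ k ∈ t, k ≠ k₀ → v ∉ Xsupp X (a k)) : v ∈ Xsupp X (∑ k ∈ t, a k) := by
  have hfilter : {k ∈ t | v ∈ Xsupp X (a k)} = {k₀} := by
    ext k
    rw [mem_filter, mem_singleton]
    exact ⟨fun ⟨hk, hvk⟩ => by_contra fun hk' => hne k hk hk' hvk, fun h => h ▸ ⟨hk₀, hv⟩⟩
  rw [mem_Xsupp_sum_iff hX ha, hfilter, card_singleton]
  exact odd_one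

theorem notMem_Xsupp_sum (hX : LinearIndependent (ZMod 2) ((↑) : X → BoolGrp))
    {ι : Type*} {t : Finset ι} {a : ι → BoolGrp} (ha : ∀ k ∈ t, a k ∈ FSset X) {v : BoolGrp}
    (hv : ∀ k ∈ t, v ∉ Xsupp X (a k)) : v ∉ Xsupp X (∑ k ∈ t, a k) := by
  rw [mem_Xsupp_sum_iff hX ha, filter_false_of_mem hv, card_empty]
  exact Nat.not_odd_zero

theorem Suitable.linearIndependent (hX : LinearIndependent (ZMod 2) ((↑) : X → BoolGrp))
    {Y : Set BoolGrp} (hY : Suitable X Y) : LinearIndependent (ZMod 2) ((↑) : Y → BoolGrp) := by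
  refine linearIndependent_of_sum_ne_zero fun D hDY ⟨y₀, hy₀⟩ hD0 => ?_
  have hFS : ∀ y ∈ D, y ∈ FSset X := fun y hy => hY.1 (hDY hy)
  obtain ⟨S, hSne, hSX, hy₀S⟩ := hFS y₀ hy₀
  have hself : ((Xsupp X y₀ : Set BoolGrp) ∩ Xsupp X y₀).Nonempty := by
    rw [Set.inter_self, hy₀S, Xsupp_sum hX hSX]
    exact hSne
  obtain ⟨x, ⟨hx, -⟩, hxY⟩ := hY.2.2 y₀ (hDY hy₀) y₀ (hDY hy₀) hself
  have hxD : x ∈ Xsupp X (∑ y ∈ D, y) :=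
    mem_Xsupp_sum_of_forall_ne hX hFS hy₀ hx fun y hy hne hxy =>
      hxY (Set.mem_biUnion ⟨hDY hy, by simp [hne]⟩ hxy)
  rw [hD0, Xsupp_zero hX] at hxD
  exact notMem_empty x hxD

end Supports

theorem SuitWitness.comp_injective {X Y : Set BoolGrp} {M m : ℕ} {y : Fin M → BoolGrp}
    (hy : SuitWitness X Y y) {f : Fin m → Fin M} (hf : Function.Injective f) :
    SuitWitness X Y (y ∘ f) := by
  refine ⟨fun i => hy.1 (f i), fun i j hij => ?_⟩
  rcases (hf.ne hij.ne).lt_or_gt with h | h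
  · exact hy.2 _ _ h
  · rw [Function.comp_apply, Function.comp_apply, Set.inter_comm]
    exact hy.2 _ _ h

theorem FSfin_sum_subset {M m : ℕ} (a : Fin M → BoolGrp) {b : Fin m → Finset (Fin M)}
    (hbne : ∀ j, (b j).Nonempty) (hbd : ∀ j k : Fin m, j ≠ k → Disjoint (b j) (b k)) :
    FSfin (fun j => ∑ k ∈ b j, a k) ⊆ FSfin a := by
  rintro g ⟨s, ⟨j, hj⟩, rfl⟩
  exact ⟨s.biUnion b, ⟨_, mem_biUnion.mpr ⟨j, hj, (hbne j).choose_spec⟩⟩,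
    (sum_biUnion fun j _ k _ hjk => hbd j k hjk).symm⟩

theorem adequateWitness_condense_general (𝒴 : Set (Set BoolGrp × Set BoolGrp))
    (hgood : GoodFamily 𝒴) (A : Set BoolGrp) (M m : ℕ)
    (a : Fin M → BoolGrp) (ha : AdequateWitness 𝒴 A a)
    (b : Fin m → Finset (Fin M)) (hbne : ∀ j, (b j).Nonempty)
    (hbd : ∀ j k : Fin m, j ≠ k → Disjoint (b j) (b k)) :
    AdequateWitness 𝒴 A (fun j => ∑ k ∈ b j, a k) := by
  intro XY hXY
  obtain ⟨hX, hY⟩ := hgood XY hXY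
  obtain ⟨hFS, y, hy, hya⟩ := ha XY hXY
  have hYind := hY.linearIndependent hX
  have haY : ∀ k, a k ∈ FSset XY.2 := fun k =>
    (hFS ⟨{k}, singleton_nonempty k, (sum_singleton a k).symm⟩).2
  have hcFS := (FSfin_sum_subset a hbne hbd).trans hFS
  choose κ hκ using hbne
  have hκ_inj : Function.Injective κ := fun j k h =>
    by_contra fun hjk => disjoint_left.mp (hbd j k hjk) (hκ j) (h ▸ hκ k)
  refine ⟨hcFS, y ∘ κ, hy.comp_injective hκ_inj, fun j k hjk => ⟨?_, ?_⟩⟩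
  · exact mem_Xsupp_sum_of_forall_ne hYind (fun l _ => haY l) (hκ j)
      (hya _ _ (hκ_inj.ne hjk)).1 fun l _ hl => (hya _ _ (Ne.symm hl)).2
  · exact notMem_Xsupp_sum hYind (fun l _ => haY l) fun l hl =>
      (hya _ _ fun h : κ j = l => disjoint_left.mp (hbd j k hjk) (hκ j) (h ▸ hl)).2

/-- Condensing witnesses: if `a` is a `(𝒴, M)`-witness for the adequacy of `A` and
`b` is an `m`-sequence of pairwise disjoint nonempty subsets of `M`, then
`c j = ∑_{k ∈ b j} a k` defines a `(𝒴, m)`-witness for the adequacy of `A`. -/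
theorem adequateWitness_condense (𝒴 : Set (Set BoolGrp × Set BoolGrp))
    (h𝒴 : 𝒴.Finite) (hgood : GoodFamily 𝒴) (A : Set BoolGrp) (M m : ℕ)
    (a : Fin M → BoolGrp) (ha : AdequateWitness 𝒴 A a)
    (b : Fin m → Finset (Fin M)) (hbne : ∀ j, (b j).Nonempty)
    (hbd : ∀ j k : Fin m, j ≠ k → Disjoint (b j) (b k)) :
    AdequateWitness 𝒴 A (fun j => ∑ k ∈ b j, a k) :=
  adequateWitness_condense_general 𝒴 hgood A M m a ha b hbne hbd
end
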